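/- arXiv:1505.00718 — 6 statements merged into one kernel-verified Lean document; each statement's English description precedes it below -/
import Mathlib

section
/- Let G be a finite group, let g₁, g₂, g ∈ G, and let D be a positive integer. Then the absolute value of the sum, over all χ ∈ Irr(G) with χ(1) ≥ D, of χ(g₁)·χ(g₂)·conj(χ(g))/χ(1), is at most (1/D)·(|C_G(g₁)|·|C_G(g₂)|·|C_G(g)|)^{1/2}, where C_G(h) denotes the centralizer of h in G. -/
open scoped BigOperators ComplexOrder

/-- The set of irreducible complex characters of `G`: class functions arising as the
character of a simple (i.e. irreducible) finite-dimensional complex representation. -/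
def IrrChar (G : Type) [Group G] : Set (G → ℂ) :=
  {f | ∃ V : FDRep ℂ G, CategoryTheory.Simple V ∧ ∀ x : G, f x = FDRep.character V x}

/-!
Each term is at most `‖χ g₁‖ ‖χ g₂‖ ‖χ g‖ / D`. Bounding `‖χ g‖` by `(∑ ‖ψ g‖²)^{1/2}` and applying
Cauchy–Schwarz to the rest reduces the claim to `∑_χ |χ(h)|² ≤ |C_G(h)|` for `h = g₁, g₂, g`.
The normalized irreducible characters are orthonormal in `ℂ^G`, and Bessel's inequality for the
indicator of the conjugacy class `K` of `h`, on which every character is constant, gives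
`∑_χ |χ(h)|² ≤ |G| / |K| = |C_G(h)|`. Orthonormality needs `conj χ(x) = χ(x⁻¹)`, which holds since
`ρ(x)` has finite order, so it is diagonalizable with eigenvalues on the unit circle.
-/

open Module

lemma sum_mul_mul_le_sqrt_mul_sqrt_mul_sqrt {ι : Type*} (s : Finset ι) {a b : ι → ℝ}
    (c : ι → ℝ) (ha : ∀ i ∈ s, 0 ≤ a i) (hb : ∀ i ∈ s, 0 ≤ b i) :
    ∑ i ∈ s, a i * b i * c i ≤
      √(∑ i ∈ s, a i ^ 2) * √(∑ i ∈ s, b i ^ 2) * √(∑ i ∈ s, c i ^ 2) := by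
  have hc : ∀ i ∈ s, c i ≤ √(∑ j ∈ s, c j ^ 2) := fun i hi =>
    (le_abs_self _).trans <| Real.abs_le_sqrt <|
      Finset.single_le_sum (f := fun j => c j ^ 2) (fun j _ => sq_nonneg _) hi
  calc ∑ i ∈ s, a i * b i * c i ≤ ∑ i ∈ s, a i * b i * √(∑ j ∈ s, c j ^ 2) :=
        Finset.sum_le_sum fun i hi =>
          mul_le_mul_of_nonneg_left (hc i hi) (mul_nonneg (ha i hi) (hb i hi))
    _ = (∑ i ∈ s, a i * b i) * √(∑ j ∈ s, c j ^ 2) := (Finset.sum_mul ..).symm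
    _ ≤ _ := mul_le_mul_of_nonneg_right (Real.sum_mul_le_sqrt_mul_sqrt s a b) (Real.sqrt_nonneg _)

lemma Complex.norm_mul_mul_conj_div_le {x y z w : ℂ} {D : ℕ} (hD : 0 < D) (hw : (D : ℂ) ≤ w) :
    ‖x * y * starRingEnd ℂ z / w‖ ≤ 1 / (D : ℝ) * (‖x‖ * ‖y‖ * ‖z‖) := by
  have hDw : (D : ℝ) ≤ ‖w‖ := by
    simpa using (Complex.le_def.mp hw).1.trans (Complex.re_le_norm _)
  rw [norm_div, norm_mul, norm_mul, Complex.norm_conj, one_div_mul_eq_div]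
  exact div_le_div_of_nonneg_left (by positivity) (by exact_mod_cast hD) hDw

namespace Module.End

section

variable {K V : Type*} [Field K] [AddCommGroup V] [Module K V]

lemma restrict_eigenspace_eq_smul_one (f : End K V) (μ : K) :
    f.restrict (mapsTo_genEigenspace_of_comm (Commute.refl f) μ 1) =
      μ • (1 : End K (f.eigenspace μ)) := by
  ext ⟨x, hx⟩
  exact mem_eigenspace_iff.mp hx

lemma HasEigenvalue.pow_eq_one {f : End K V} {μ : K} (hμ : f.HasEigenvalue μ) {n : ℕ}
    (hf : f ^ n = 1) : μ ^ n = 1 := by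
  obtain ⟨v, hv⟩ := hμ.exists_hasEigenvector
  have hv_fixed := hv.pow_apply n
  rw [hf, one_apply] at hv_fixed
  exact smul_left_injective K hv.2 (hv_fixed.symm.trans (one_smul K v).symm)

variable [FiniteDimensional K V]

lemma IsSemisimple.trace_pow_eq_sum [IsAlgClosed K] {f : End K V} (hf : f.IsSemisimple) (k : ℕ) :
    LinearMap.trace K V (f ^ k) =
      ∑ μ ∈ f.finite_hasEigenvalue.toFinset, μ ^ k * finrank K (f.eigenspace μ) := by
  classical
  have hint : DirectSum.IsInternal (fun μ : K => f.eigenspace μ) :=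
    (DirectSum.isInternal_submodule_iff_iSupIndep_and_iSup_eq_top _).mpr
      ⟨f.eigenspaces_iSupIndep, hf.iSup_eigenspace_eq_top⟩
  rw [LinearMap.trace_eq_sum_trace_restrict' hint f.finite_hasEigenvalue
    (fun μ => mapsTo_genEigenspace_of_comm ((Commute.refl f).pow_right k) μ 1)]
  refine Finset.sum_congr rfl fun μ _ => ?_
  rw [← pow_restrict k (mapsTo_genEigenspace_of_comm (Commute.refl f) μ 1),
    restrict_eigenspace_eq_smul_one, _root_.smul_pow, one_pow, map_smul,
    LinearMap.trace_one, smul_eq_mul]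

end

section Complex

variable {V : Type*} [AddCommGroup V] [Module ℂ V] [FiniteDimensional ℂ V]

lemma conj_trace_of_pow_eq_one {f : End ℂ V} {n : ℕ} (hn : n ≠ 0) (hf : f ^ n = 1) :
    starRingEnd ℂ (LinearMap.trace ℂ V f) = LinearMap.trace ℂ V (f ^ (n - 1)) := by
  have hsemisimple : f.IsSemisimple := by
    refine isSemisimple_of_squarefree_aeval_eq_zero
      (Polynomial.X_pow_sub_one_separable_iff.mpr (by exact_mod_cast hn)).squarefree ?_
    simp [hf]
  conv_lhs => rw [← pow_one f]
  rw [hsemisimple.trace_pow_eq_sum, hsemisimple.trace_pow_eq_sum, map_sum]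
  refine Finset.sum_congr rfl fun μ hμ => ?_
  have hμn : μ ^ n = 1 := HasEigenvalue.pow_eq_one (f.finite_hasEigenvalue.mem_toFinset.mp hμ) hf
  rw [map_mul, map_natCast, pow_one,
    ← RCLike.inv_eq_conj (Complex.norm_eq_one_of_pow_eq_one hμn hn),
    eq_inv_of_mul_eq_one_left (a := μ ^ (n - 1)) (by rw [pow_sub_one_mul hn, hμn])]

end Complex

end Module.End

namespace FDRep

variable {G : Type} [Group G]

lemma conj_character (V : FDRep ℂ G) {g : G} (hg : IsOfFinOrder g) :
    starRingEnd ℂ (V.character g) = V.character g⁻¹ := by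
  have hn := hg.orderOf_pos.ne'
  have hpow : V.ρ g ^ orderOf g = 1 := by rw [← map_pow, pow_orderOf_eq_one, map_one]
  rw [character, character, Module.End.conj_trace_of_pow_eq_one hn hpow, ← map_pow,
    eq_inv_of_mul_eq_one_left (a := g ^ (orderOf g - 1))
      (by rw [pow_sub_one_mul hn, pow_orderOf_eq_one])]

variable [Fintype G]

open scoped Classical in
lemma sum_character_mul_character_inv (V W : FDRep ℂ G) [CategoryTheory.Simple V]
    [CategoryTheory.Simple W] :
    ∑ g, V.character g * W.character g⁻¹ = if Nonempty (V ≅ W) then (Nat.card G : ℂ) else 0 := by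
  have : Invertible (Nat.card G : ℂ) := invertibleOfNonzero (by simp)
  have h := char_orthonormal V W
  rw [inv_mul_eq_iff_eq_mul₀ (by simp)] at h
  rw [h]
  split_ifs <;> simp

lemma sum_conj_character_mul_character (V W : FDRep ℂ G) :
    ∑ g, starRingEnd ℂ (V.character g) * W.character g =
      ∑ g, V.character g * W.character g⁻¹ := by
  rw [← Equiv.sum_comp (Equiv.inv G)]
  simp [conj_character V (isOfFinOrder_of_finite _)]

end FDRep

section NormalizedVec

variable {α : Type*} [Fintype α]

noncomputable def normalizedVec (f : α → ℂ) : EuclideanSpace ℂ α :=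
  (Real.sqrt (Nat.card α) : ℂ)⁻¹ • WithLp.toLp 2 f

lemma inner_normalizedVec (f h : α → ℂ) :
    inner ℂ (normalizedVec f) (normalizedVec h) =
      (Nat.card α : ℂ)⁻¹ * ∑ x, starRingEnd ℂ (f x) * h x := by
  have hsqrt : (Real.sqrt (Nat.card α) : ℂ) * Real.sqrt (Nat.card α) = Nat.card α := by
    rw [← Complex.ofReal_mul, Real.mul_self_sqrt (Nat.cast_nonneg _), Complex.ofReal_natCast]
  simp only [normalizedVec, inner_smul_left, inner_smul_right, PiLp.inner_apply, map_inv₀,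
    Complex.conj_ofReal, ← mul_assoc, ← mul_inv, hsqrt, RCLike.inner_apply']

lemma sum_conj_mul_indicator {K : Set α} {f : α → ℂ} {a : ℂ} (hf : ∀ x ∈ K, f x = a) :
    ∑ x, starRingEnd ℂ (f x) * K.indicator 1 x = K.ncard * starRingEnd ℂ a := by
  classical
  simp only [Set.indicator_apply, Pi.one_apply, mul_ite, mul_one, mul_zero]
  rw [← Finset.sum_filter, Finset.sum_congr rfl fun x hx => by rw [hf x (by simpa using hx)],
    Finset.sum_const, nsmul_eq_mul, Set.ncard_eq_toFinset_card']
  congr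
  ext
  simp

end NormalizedVec

variable {G : Type} [Group G]

lemma IrrChar.apply_of_isConj {χ : G → ℂ} (hχ : χ ∈ IrrChar G) {x g : G} (hxg : IsConj x g) :
    χ x = χ g := by
  obtain ⟨V, -, hV⟩ := hχ
  obtain ⟨c, rfl⟩ := isConj_iff.mp hxg.symm
  rw [hV, hV, FDRep.char_conj]

lemma IrrChar.sum_conj_mul [Fintype G] {χ ψ : G → ℂ} (hχ : χ ∈ IrrChar G) (hψ : ψ ∈ IrrChar G) :
    ∑ x, starRingEnd ℂ (χ x) * ψ x = if χ = ψ then (Nat.card G : ℂ) else 0 := by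
  obtain ⟨V, hV, hχV⟩ := hχ
  obtain ⟨W, hW, hψW⟩ := hψ
  obtain rfl : χ = V.character := funext hχV
  obtain rfl : ψ = W.character := funext hψW
  rw [FDRep.sum_conj_character_mul_character]
  split_ifs with h
  · rw [h, FDRep.sum_character_mul_character_inv,
      if_pos (⟨CategoryTheory.Iso.refl W⟩ : Nonempty (W ≅ W))]
  · rw [FDRep.sum_character_mul_character_inv, if_neg fun ⟨e⟩ => h (FDRep.char_iso e)]

lemma ncard_orbit_conjAct_mul_card_centralizer (g : G) :
    (MulAction.orbit (ConjAct G) g).ncard * Nat.card (Subgroup.centralizer {g}) = Nat.card G := by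
  rw [Subgroup.nat_card_centralizer_nat_card_stabilizer, ← MulAction.index_stabilizer, mul_comm,
    Subgroup.card_mul_index]
  rfl

variable [Fintype G]

lemma orthonormal_normalizedVec_irrChar :
    Orthonormal ℂ (fun χ : IrrChar G => normalizedVec (χ : G → ℂ)) := by
  rw [orthonormal_iff_ite]
  intro χ ψ
  rw [inner_normalizedVec, IrrChar.sum_conj_mul χ.2 ψ.2]
  split_ifs with h h' h'
  · simp
  · exact absurd (Subtype.ext h) h'
  · exact absurd (congrArg Subtype.val h') h
  · simp

lemma IrrChar.finite : (IrrChar G).Finite :=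
  Set.finite_coe_iff.mp orthonormal_normalizedVec_irrChar.linearIndependent.finite

lemma sum_norm_sq_irrChar_le_card_centralizer {s : Finset (G → ℂ)} (hs : ↑s ⊆ IrrChar G)
    (g : G) :
    ∑ χ ∈ s, ‖χ g‖ ^ 2 ≤ Nat.card (Subgroup.centralizer {g}) := by
  classical
  set K := MulAction.orbit (ConjAct G) g
  set c := Nat.card (Subgroup.centralizer {g})
  have hc : (0 : ℝ) < c := Nat.cast_pos.mpr Nat.card_pos
  have hKc : (K.ncard : ℂ) * c = Nat.card G := by
    exact_mod_cast ncard_orbit_conjAct_mul_card_centralizer g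
  have hK : (K.ncard : ℂ) ≠ 0 := by
    exact_mod_cast (Set.ncard_pos (Set.toFinite K)).mpr ⟨g, MulAction.mem_orbit_self g⟩ |>.ne'
  have hinner : ∀ f : G → ℂ, (∀ x ∈ K, f x = f g) →
      inner ℂ (normalizedVec f) (normalizedVec (K.indicator 1)) =
        (c : ℂ)⁻¹ * starRingEnd ℂ (f g) := by
    intro f hf
    rw [inner_normalizedVec, sum_conj_mul_indicator hf, ← hKc]
    field_simp
  have hbessel := orthonormal_normalizedVec_irrChar.sum_inner_products_le
    (x := normalizedVec (K.indicator 1)) (s := s.subtype (· ∈ IrrChar G))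
  rw [Finset.sum_subtype_of_mem
    (fun χ => ‖inner ℂ (normalizedVec χ) (normalizedVec (K.indicator 1))‖ ^ 2) hs] at hbessel
  have hgK : g ∈ K := MulAction.mem_orbit_self g
  have hu : ‖normalizedVec (K.indicator 1)‖ ^ 2 = (c : ℝ)⁻¹ := by
    rw [@norm_sq_eq_re_inner ℂ, hinner _ fun x hx => by
      rw [Set.indicator_of_mem hgK, Set.indicator_of_mem hx, Pi.one_apply, Pi.one_apply]]
    simp [Set.indicator_of_mem hgK]
  have hterm : ∀ χ ∈ s, ‖inner ℂ (normalizedVec χ) (normalizedVec (K.indicator 1))‖ ^ 2 =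
      (c : ℝ)⁻¹ ^ 2 * ‖χ g‖ ^ 2 := by
    intro χ hχ
    rw [hinner χ fun x hx => IrrChar.apply_of_isConj (hs hχ) (ConjAct.mem_orbit_conjAct.mp hx)]
    simp [mul_pow]
  rw [Finset.sum_congr rfl hterm, ← Finset.mul_sum, hu] at hbessel
  calc ∑ χ ∈ s, ‖χ g‖ ^ 2 = (c : ℝ) ^ 2 * ((c : ℝ)⁻¹ ^ 2 * ∑ χ ∈ s, ‖χ g‖ ^ 2) := by
        field_simp
    _ ≤ (c : ℝ) ^ 2 * (c : ℝ)⁻¹ := by gcongr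
    _ = c := by field_simp

/-- The part of the Frobenius character sum over characters of degree at least `D` is
bounded by `(1/D) (|C_G(g₁)| |C_G(g₂)| |C_G(g)|)^{1/2}`. -/
theorem stmt_5 (G : Type) [Group G] [Fintype G] (g₁ g₂ g : G) (D : ℕ) (hD : 0 < D) :
    ‖∑ᶠ χ ∈ {χ ∈ IrrChar G | (D : ℂ) ≤ χ 1},
        χ g₁ * χ g₂ * (starRingEnd ℂ) (χ g) / χ 1‖ ≤
      (1 / (D : ℝ)) * Real.sqrt
        ((Nat.card (Subgroup.centralizer {g₁} : Subgroup G) : ℝ) *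
          (Nat.card (Subgroup.centralizer {g₂} : Subgroup G) : ℝ) *
          (Nat.card (Subgroup.centralizer {g} : Subgroup G) : ℝ)) := by
  have hfin : {χ ∈ IrrChar G | (D : ℂ) ≤ χ 1}.Finite := IrrChar.finite.subset (Set.sep_subset _ _)
  have hirr : ↑hfin.toFinset ⊆ IrrChar G := by
    rw [hfin.coe_toFinset]; exact Set.sep_subset _ _
  rw [finsum_mem_eq_finite_toFinset_sum _ hfin]
  calc _ ≤ ∑ χ ∈ hfin.toFinset, 1 / (D : ℝ) * (‖χ g₁‖ * ‖χ g₂‖ * ‖χ g‖) :=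
        (norm_sum_le _ _).trans <| Finset.sum_le_sum fun χ hχ =>
          Complex.norm_mul_mul_conj_div_le hD (hfin.mem_toFinset.mp hχ).2
    _ ≤ 1 / (D : ℝ) * (√(∑ χ ∈ hfin.toFinset, ‖χ g₁‖ ^ 2) * √(∑ χ ∈ hfin.toFinset, ‖χ g₂‖ ^ 2) *
          √(∑ χ ∈ hfin.toFinset, ‖χ g‖ ^ 2)) := by
      rw [← Finset.mul_sum]
      gcongr
      exact sum_mul_mul_le_sqrt_mul_sqrt_mul_sqrt _ _ (fun _ _ => norm_nonneg _)
        (fun _ _ => norm_nonneg _)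
    _ ≤ _ := by
      rw [Real.sqrt_mul (by positivity), Real.sqrt_mul (by positivity)]
      gcongr <;> exact sum_norm_sq_irrChar_le_card_centralizer hirr _
end

section
/- For every positive integer k there exists a positive integer f(k) such that for all integers n ≥ f(k) and all positive integers N having at most k distinct prime divisors, every element g of the alternating group A_n can be written as g = x^N * y^N with x, y ∈ A_n. -/
/-!
A nontrivial even permutation `g` moving `w` points in `r` cycles has `w + r` even and
`2 r ≤ w`. Threading its cycles one at a time into two lists that share a point writes `g` as
a product of two `ℓ₀`-cycles with `ℓ₀ = (w + r) / 2 ≤ 3 w / 4`; multiplying the factors by a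
common transposition on the right resp. left lengthens both by one, up to length `n`. An
`ℓ`-cycle with `ℓ` coprime to `2 N` is even and of order prime to `N`, hence an `N`-th power in
`A_n`. Finally, of the `k + 2` pairwise coprime numbers `m (k + 1)! + 1`, `m` consecutive, in
an interval of length `(k + 2)! + 1`, one avoids the at most `k + 1` primes of `2 N`.
-/

open Finset Equiv Equiv.Perm
open scoped Nat Function

namespace Nat

theorem exists_coprime_of_pairwise_coprime {ι : Type*} {s : Finset ι} {t : ι → ℕ}
    (ht : (s : Set ι).Pairwise (Coprime on t)) {N : ℕ} (hN : N ≠ 0)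
    (hs : #N.primeFactors < #s) : ∃ i ∈ s, (t i).Coprime N := by
  by_contra! h
  have hp : ∀ i ∈ s, ∃ p ∈ N.primeFactors, p ∣ t i := fun i hi => by
    obtain ⟨p, hp, hpt, hpN⟩ := Prime.not_coprime_iff_dvd.1 (h i hi)
    exact ⟨p, mem_primeFactors.2 ⟨hp, hpN, hN⟩, hpt⟩
  choose! p hpN hpt using hp
  obtain ⟨i, hi, j, hj, hij, hpij⟩ := exists_ne_map_eq_of_card_lt_of_maps_to hs hpN
  exact Prime.not_coprime_iff_dvd.2
    ⟨p i, prime_of_mem_primeFactors (hpN i hi), hpt i hi, hpij ▸ hpt j hj⟩ (ht hi hj hij)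

theorem exists_coprime_mem_Icc (s : ℕ) {N k : ℕ} (hN : N ≠ 0) (hk : #N.primeFactors ≤ k) :
    ∃ ℓ, s ≤ ℓ ∧ ℓ ≤ s + (k + 1)! + 1 ∧ ℓ.Coprime N := by
  have ht : ((range (k + 1) : Finset ℕ) : Set ℕ).Pairwise
      (Coprime on fun j => (s / k ! + 1 + j) * k ! + 1) := by
    have key : ∀ i j, i < j → j ≤ k →
        ((s / k ! + 1 + i) * k ! + 1).Coprime ((s / k ! + 1 + j) * k ! + 1) :=
      fun i j hij hj => coprime_mul_succ (dvd_factorial (by omega) (by omega))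
    intro i hi j hj hij
    simp only [coe_range, Set.mem_Iio] at hi hj
    rcases lt_or_gt_of_ne hij with h | h
    · exact key i j h (by omega)
    · exact (key j i h (by omega)).symm
  obtain ⟨j, hj, hcop⟩ :=
    exists_coprime_of_pairwise_coprime ht hN (by simpa using hk.trans_lt k.lt_succ_self)
  rw [mem_range] at hj
  refine ⟨(s / k ! + 1 + j) * k ! + 1, ?_, ?_, hcop⟩
  · have := lt_div_mul_add (a := s) (factorial_pos k)
    nlinarith
  · have := div_mul_le_self s k !
    have : (1 + j) * k ! ≤ (k + 1)! := by
      rw [factorial_succ]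
      exact Nat.mul_le_mul_right _ (by omega)
    nlinarith

end Nat

theorem exists_pow_eq_of_coprime_orderOf {G : Type*} [Monoid G] {x : G} {N : ℕ}
    (h : N.Coprime (orderOf x)) : ∃ u, u ^ N = x := by
  obtain ⟨m, hm⟩ := exists_pow_eq_self_of_coprime h
  exact ⟨x ^ m, by rw [← pow_mul, mul_comm, pow_mul, hm]⟩

namespace List

variable {α : Type*} [DecidableEq α]

theorem formPerm_append_cons (P S : List α) (s : α) :
    formPerm (P ++ s :: S) = formPerm (P ++ [s]) * formPerm (s :: S) := by
  induction P with
  | nil => simp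
  | cons x P ih =>
    cases P with
    | nil => simp
    | cons y P => simp_all [mul_assoc]

theorem formPerm_cons_append_mul_formPerm_cons_append {p s : α} {P S : List α}
    (h : (p :: (P ++ s :: S)).Nodup) :
    formPerm (p :: (P ++ [s])) * formPerm (s :: (S ++ [p])) = formPerm (P ++ s :: S) := by
  have hP : formPerm (p :: (P ++ [s])) = formPerm (P ++ [s]) * Equiv.swap s p := by
    rw [← formPerm_rotate_one _ (h.sublist (by simp)), rotate_cons_succ, rotate_zero,
      append_assoc, singleton_append, formPerm_append_pair]
  have hS : formPerm (s :: (S ++ [p])) = Equiv.swap p s * formPerm (s :: S) := by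
    rw [← formPerm_cons_cons, ← formPerm_rotate_one (p :: s :: S) (h.sublist (by simp)),
      rotate_cons_succ, rotate_zero, cons_append]
  rw [hP, hS, mul_assoc, ← mul_assoc (Equiv.swap s p), Equiv.swap_comm, Equiv.swap_mul_self,
    one_mul, ← formPerm_append_cons]

theorem isCycle_formPerm_and_card_support {l : List α} [Fintype α] (hl : l.Nodup)
    (hn : 2 ≤ l.length) : l.formPerm.IsCycle ∧ #l.formPerm.support = l.length := by
  refine ⟨isCycle_formPerm hl hn, ?_⟩
  rw [support_formPerm_of_nodup l hl (by rintro x rfl; simp at hn), toFinset_card_of_nodup hl]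

end List

namespace Equiv.Perm

variable {α : Type*} [DecidableEq α] [Fintype α]

theorem IsCycle.exists_formPerm_append_cons_eq {c : Perm α} (hc : c.IsCycle) {i : ℕ}
    (hi : 1 ≤ i) (hic : i ≤ #c.support) :
    ∃ (P S : List α) (s : α), (P ++ s :: S).Nodup ∧ P.length + 1 = i ∧
      S.length + 1 = #c.support + 1 - i ∧ (∀ x ∈ P ++ s :: S, x ∈ c.support) ∧
      (P ++ s :: S).formPerm = c := by
  obtain ⟨x, hx, -⟩ := id hc
  have hlen : (c.toList x).length = #c.support := by rw [length_toList, hc.cycleOf_eq hx]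
  have hlt : i - 1 < (c.toList x).length := by omega
  obtain ⟨P, S, s, hl, hP⟩ :
      ∃ (P S : List α) (s : α), c.toList x = P ++ s :: S ∧ P.length = i - 1 :=
    ⟨_, _, _, by rw [← List.drop_eq_getElem_cons hlt, List.take_append_drop],
      List.length_take_of_le hlt.le⟩
  have hS : S.length + P.length + 1 = #c.support := by
    rw [← hlen, hl, List.length_append, List.length_cons]
    omega
  refine ⟨P, S, s, hl ▸ nodup_toList c x, by omega, by omega, fun y hy => ?_, ?_⟩
  · rw [← hl, mem_toList_iff] at hy
    exact hy.1.mem_support_iff.1 hy.2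
  · rw [← hl, formPerm_toList, hc.cycleOf_eq hx]

/-- `g = (A ++ [p]).formPerm * (p :: B).formPerm` with lists of lengths `a` and `b` meeting at `p`.
Lists rather than cycles, because a factor of length one (that is, `1`) must be allowed. -/
def IsLinkedCycleProduct (g : Perm α) (a b : ℕ) : Prop :=
  ∃ (A B : List α) (p : α), (A ++ [p]).Nodup ∧ (p :: B).Nodup ∧ A.length + 1 = a ∧
    B.length + 1 = b ∧ (∀ x ∈ A ++ p :: B, x ∈ g.support) ∧
    (A ++ [p]).formPerm * (p :: B).formPerm = g

theorem IsCycle.isLinkedCycleProduct {c : Perm α} (hc : c.IsCycle) {i : ℕ} (hi : 1 ≤ i)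
    (hic : i ≤ #c.support) : IsLinkedCycleProduct c i (#c.support + 1 - i) := by
  obtain ⟨P, S, s, hl, hP, hS, hPS, rfl⟩ := hc.exists_formPerm_append_cons_eq hi hic
  exact ⟨P, S, s, hl.sublist (by simp), hl.sublist (by simp), hP, hS, hPS,
    (List.formPerm_append_cons P S s).symm⟩

theorem IsLinkedCycleProduct.cycle_mul {h c : Perm α} {a b i : ℕ}
    (hh : IsLinkedCycleProduct h a b) (hc : c.IsCycle) (hd : c.Disjoint h) (hi : 1 ≤ i)
    (hic : i ≤ #c.support) :
    IsLinkedCycleProduct (c * h) (a + i) (b + (#c.support + 1 - i)) := by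
  obtain ⟨A, B, p, hA, hB, rfl, rfl, hAB, rfl⟩ := hh
  obtain ⟨P, S, s, hl, hP, hS, hPS, rfl⟩ := hc.exists_formPerm_append_cons_eq hi hic
  have hsep : ∀ x ∈ A ++ p :: B, ∀ y ∈ P ++ s :: S, x ≠ y := by
    rintro x hx y hy rfl
    exact disjoint_left.1 (disjoint_iff_disjoint_support.1 hd) (hPS x hy) (hAB x hx)
  have hcomm : Commute (P ++ s :: S).formPerm (A ++ [p]).formPerm := by
    refine (hd.mono subset_rfl fun x hx => hAB x ?_).commute
    have := List.support_formPerm_le _ hx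
    simp only [List.mem_toFinset, List.mem_append, List.mem_cons] at this ⊢
    tauto
  refine ⟨A ++ p :: P, S ++ p :: B, s, ?_, ?_, ?_, ?_, ?_, ?_⟩
  · rw [show A ++ p :: P ++ [s] = (A ++ [p]) ++ (P ++ [s]) by simp, List.nodup_append]
    refine ⟨hA, hl.sublist (by simp), fun x hx y hy => hsep x ?_ y ?_⟩ <;> simp_all <;> tauto
  · rw [← List.cons_append, List.nodup_append]
    refine ⟨hl.sublist (by simp), hB, fun x hx y hy => (hsep y ?_ x ?_).symm⟩ <;> simp_all
  · simp only [List.length_append, List.length_cons]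
    omega
  · simp only [List.length_append, List.length_cons]
    omega
  · intro x hx
    rw [hd.support_mul, mem_union]
    simp only [List.mem_append, List.mem_cons] at hx hAB hPS
    rcases hx with (hx | hx | hx) | hx | hx | hx <;> simp_all
  · have hp : p ∉ P ++ s :: S := fun hp => hsep p (by simp) p hp rfl
    have hLA :
        (A ++ p :: P ++ [s]).formPerm = (A ++ [p]).formPerm * (p :: (P ++ [s])).formPerm := by
      rw [List.append_assoc, List.cons_append, List.formPerm_append_cons]
    have hLB :
        (s :: (S ++ p :: B)).formPerm = (s :: (S ++ [p])).formPerm * (p :: B).formPerm := by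
      rw [← List.cons_append, List.formPerm_append_cons, List.cons_append]
    rw [hLA, hLB, mul_assoc, ← mul_assoc (p :: (P ++ [s])).formPerm,
      List.formPerm_cons_append_mul_formPerm_cons_append (List.nodup_cons.2 ⟨hp, hl⟩),
      ← mul_assoc, ← hcomm.eq, mul_assoc]

theorem two_mul_card_cycleType_le (σ : Perm α) :
    2 * Multiset.card σ.cycleType ≤ #σ.support := by
  rw [← sum_cycleType, mul_comm, ← smul_eq_mul]
  exact Multiset.card_nsmul_le_sum fun _ => two_le_of_mem_cycleType

theorem isLinkedCycleProduct_of_card_cycleType_le {g : Perm α} (hg : g ≠ 1) {a b : ℕ}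
    (ha : Multiset.card g.cycleType ≤ a) (hb : Multiset.card g.cycleType ≤ b)
    (hab : a + b = #g.support + Multiset.card g.cycleType) : IsLinkedCycleProduct g a b := by
  induction g using cycle_induction_on generalizing a b with
  | base_one => exact absurd rfl hg
  | base_cycles c hc =>
    rw [hc.cycleType, Multiset.card_singleton] at ha hb hab
    convert hc.isLinkedCycleProduct ha (by omega : a ≤ #c.support) using 1
    omega
  | induction_disjoint c h hd hc ihc ihh =>
    obtain rfl | hh := eq_or_ne h 1
    · rw [mul_one] at hg ha hb hab ⊢
      exact ihc hg ha hb hab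
    have hr := two_mul_card_cycleType_le h
    rw [hd.cycleType_mul, hc.cycleType, Multiset.singleton_add, Multiset.card_cons] at ha hb hab
    rw [hd.card_support_mul] at hab
    -- the first factor takes `i` points of `c`, chosen so that the induction hypothesis applies
    obtain ⟨i, hi⟩ : ∃ i, i = max 1 (#c.support + 1 + Multiset.card h.cycleType - b) :=
      ⟨_, rfl⟩
    have := hc.two_le_card_support
    convert (ihh hh (a := a - i) (b := b - (#c.support + 1 - i)) (by omega) (by omega)
      (by omega)).cycle_mul hc hd (i := i) (by omega) (by omega) using 1 <;> omega

def IsProductOfTwoCycles (g : Perm α) (ℓ : ℕ) : Prop :=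
  ∃ x y : Perm α, x.IsCycle ∧ y.IsCycle ∧ #x.support = ℓ ∧ #y.support = ℓ ∧ x * y = g

theorem IsLinkedCycleProduct.isProductOfTwoCycles {g : Perm α} {ℓ : ℕ}
    (h : IsLinkedCycleProduct g ℓ ℓ) (hℓ : 2 ≤ ℓ) : IsProductOfTwoCycles g ℓ := by
  obtain ⟨A, B, p, hA, hB, hAℓ, hBℓ, -, rfl⟩ := h
  obtain ⟨hAc, hAs⟩ := List.isCycle_formPerm_and_card_support hA
    (by rw [List.length_append, List.length_singleton]; omega)
  obtain ⟨hBc, hBs⟩ := List.isCycle_formPerm_and_card_support hB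
    (by rw [List.length_cons]; omega)
  exact ⟨_, _, hAc, hBc, by simp [hAs, hAℓ], by simp [hBs, hBℓ], rfl⟩

theorem IsCycle.swap_mul_of_mem_of_notMem {c : Perm α} (hc : c.IsCycle) {a b : α}
    (ha : a ∈ c.support) (hb : b ∉ c.support) :
    (swap a b * c).IsCycle ∧ #(swap a b * c).support = #c.support + 1 := by
  obtain ⟨t, ht⟩ : ∃ t, c.toList a = a :: t := by
    obtain ⟨y, t, hyt⟩ := List.exists_cons_of_ne_nil (by simpa using ha : c.toList a ≠ [])
    have hy := toList_getElem_zero c a ha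
    simp only [hyt, List.getElem_cons_zero] at hy
    exact ⟨t, hy ▸ hyt⟩
  have hnd : (b :: a :: t).Nodup := by
    refine List.nodup_cons.2 ⟨fun hbt => hb ?_, ht ▸ nodup_toList c a⟩
    rw [← ht, mem_toList_iff] at hbt
    exact hbt.1.mem_support_iff.1 hbt.2
  have hform : (b :: a :: t).formPerm = swap a b * c := by
    rw [List.formPerm_cons_cons, ← ht, formPerm_toList, hc.cycleOf_eq (mem_support.1 ha),
      swap_comm]
  have hlen : (a :: t).length = #c.support := by
    rw [← ht, length_toList, hc.cycleOf_eq (mem_support.1 ha)]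
  rw [← hform]
  simpa [hlen] using List.isCycle_formPerm_and_card_support hnd (by simp)

theorem IsCycle.mul_swap_of_mem_of_notMem {c : Perm α} (hc : c.IsCycle) {a b : α}
    (ha : a ∈ c.support) (hb : b ∉ c.support) :
    (c * swap a b).IsCycle ∧ #(c * swap a b).support = #c.support + 1 := by
  obtain ⟨hcyc, hcard⟩ := hc.swap_mul_of_mem_of_notMem ha hb
  have hconj : c * swap a b = swap a b * (swap a b * c) * (swap a b)⁻¹ := by simp
  rw [hconj]
  exact ⟨hcyc.conj, by rw [card_support_conj, hcard]⟩

theorem IsProductOfTwoCycles.succ {g : Perm α} {ℓ : ℕ} (h : IsProductOfTwoCycles g ℓ)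
    (hℓ : ℓ < Fintype.card α) : IsProductOfTwoCycles g (ℓ + 1) := by
  obtain ⟨x, y, hx, hy, hxℓ, hyℓ, rfl⟩ := h
  -- `x * y = (x * swap a z) * (swap a z * y)`, and both factors are longer cycles
  obtain ⟨a, z, ha, hz, haz⟩ : ∃ a z, a ∈ x.support ∧ z ∉ x.support ∧
      (a ∈ y.support ∧ z ∉ y.support ∨ z ∈ y.support ∧ a ∉ y.support) := by
    by_cases hxy : x.support = y.support
    · obtain ⟨a, ha⟩ := hx.nonempty_support
      obtain ⟨z, -, hz⟩ := exists_mem_notMem_of_card_lt_card (s := x.support) (t := univ)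
        (by rwa [hxℓ, Finset.card_univ])
      exact ⟨a, z, ha, hz, .inl ⟨hxy ▸ ha, hxy ▸ hz⟩⟩
    · obtain ⟨a, ha, hay⟩ := not_subset.1 fun hs => hxy (eq_of_subset_of_card_le hs (by omega))
      obtain ⟨z, hzy, hz⟩ :=
        not_subset.1 fun hs => hxy (eq_of_subset_of_card_le hs (by omega)).symm
      exact ⟨a, z, ha, hz, .inr ⟨hzy, hay⟩⟩
  obtain ⟨hx', hxℓ'⟩ := hx.mul_swap_of_mem_of_notMem ha hz
  obtain ⟨hy', hyℓ'⟩ :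
      (swap a z * y).IsCycle ∧ #(swap a z * y).support = #y.support + 1 := by
    rcases haz with ⟨hay, hzy⟩ | ⟨hzy, hay⟩
    · exact hy.swap_mul_of_mem_of_notMem hay hzy
    · rw [swap_comm]
      exact hy.swap_mul_of_mem_of_notMem hzy hay
  exact ⟨_, _, hx', hy', by rw [hxℓ', hxℓ], by rw [hyℓ', hyℓ], by simp [mul_assoc]⟩

theorem IsProductOfTwoCycles.of_le {g : Perm α} {ℓ m : ℕ} (h : IsProductOfTwoCycles g ℓ)
    (hℓm : ℓ ≤ m) (hm : m ≤ Fintype.card α) : IsProductOfTwoCycles g m := by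
  induction m, hℓm using Nat.le_induction with
  | base => exact h
  | succ m _ ih => exact (ih (by omega)).succ (by omega)

theorem exists_isProductOfTwoCycles {g : Perm α} (hg : sign g = 1) (hg1 : g ≠ 1) :
    ∃ ℓ₀, 4 * ℓ₀ ≤ 3 * #g.support ∧
      ∀ ℓ, ℓ₀ ≤ ℓ → ℓ ≤ Fintype.card α → IsProductOfTwoCycles g ℓ := by
  have hr := two_mul_card_cycleType_le g
  have hw := one_lt_card_support_of_ne_one hg1
  have hr1 : Multiset.card g.cycleType ≠ 0 := by simpa [cycleType_eq_zero] using hg1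
  obtain ⟨m, hm⟩ : Even (#g.support + Multiset.card g.cycleType) := by
    rwa [sign_of_cycleType, sum_cycleType, neg_one_pow_eq_one_iff_even (by decide)] at hg
  refine ⟨m, by omega, fun ℓ hmℓ hℓ => ?_⟩
  exact ((isLinkedCycleProduct_of_card_cycleType_le hg1 (by omega) (by omega)
    (by omega)).isProductOfTwoCycles (by omega)).of_le hmℓ hℓ

theorem IsCycle.exists_alternatingGroup_pow_eq {x : Perm α} (hx : x.IsCycle)
    (hodd : Odd #x.support) {N : ℕ} (hN : N.Coprime #x.support) :
    ∃ u : alternatingGroup α, (u : Perm α) ^ N = x := by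
  have hmem : x ∈ alternatingGroup α := by
    rw [mem_alternatingGroup, hx.sign, hodd.neg_one_pow, neg_neg]
  obtain ⟨u, hu⟩ :=
    exists_pow_eq_of_coprime_orderOf (x := (⟨x, hmem⟩ : alternatingGroup α))
    (by rwa [Subgroup.orderOf_mk, hx.orderOf])
  exact ⟨u, by simpa using congrArg Subtype.val hu⟩

end Equiv.Perm

theorem stmt_8_general (k : ℕ) :
    ∃ f : ℕ, 0 < f ∧ ∀ n : ℕ, f ≤ n → ∀ N : ℕ, 0 < N → N.primeFactors.card ≤ k →
      ∀ g : alternatingGroup (Fin n),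
        ∃ x y : alternatingGroup (Fin n), x ^ N * y ^ N = g := by
  refine ⟨4 * ((k + 2)! + 1), by positivity, fun n hn N hN hNk g => ?_⟩
  obtain rfl | hg := eq_or_ne g 1
  · exact ⟨1, 1, by simp⟩
  obtain ⟨ℓ₀, hℓ₀, hprod⟩ :=
    exists_isProductOfTwoCycles (mem_alternatingGroup.1 g.2) (by simpa using hg)
  have h2N : #(2 * N).primeFactors ≤ k + 1 := by
    rw [Nat.primeFactors_mul two_ne_zero hN.ne', Nat.prime_two.primeFactors]
    exact (card_union_le _ _).trans (by simpa [add_comm] using hNk)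
  obtain ⟨ℓ, hℓ₀ℓ, hℓ, hcop⟩ := Nat.exists_coprime_mem_Icc ℓ₀ (by omega) h2N
  rw [show k + 1 + 1 = k + 2 by rfl] at hℓ
  -- `ℓ` is odd, so `ℓ`-cycles are even, and prime to `N`
  rw [Nat.coprime_mul_iff_right, Nat.coprime_two_right] at hcop
  have hg_le : #(g : Perm (Fin n)).support ≤ n := by
    simpa using card_le_univ (g : Perm (Fin n)).support
  obtain ⟨x, y, hx, hy, hxℓ, hyℓ, hxy⟩ := hprod ℓ hℓ₀ℓ (by simp; omega)
  obtain ⟨u, hu⟩ := hx.exists_alternatingGroup_pow_eq (hxℓ ▸ hcop.1) (hxℓ ▸ hcop.2.symm)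
  obtain ⟨v, hv⟩ := hy.exists_alternatingGroup_pow_eq (hyℓ ▸ hcop.1) (hyℓ ▸ hcop.2.symm)
  exact ⟨u, v, Subtype.ext (by simp [hu, hv, hxy])⟩

/-- For every positive integer `k` there is `f = f(k)` such that for all `n ≥ f` and all
positive integers `N` with at most `k` distinct prime divisors, the word map
`(x, y) ↦ x^N y^N` is surjective on `A_n`. -/
theorem stmt_8 (k : ℕ) (hk : 0 < k) :
    ∃ f : ℕ, 0 < f ∧ ∀ n : ℕ, f ≤ n → ∀ N : ℕ, 0 < N → N.primeFactors.card ≤ k →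
      ∀ g : alternatingGroup (Fin n),
        ∃ x y : alternatingGroup (Fin n), x ^ N * y ^ N = g :=
  stmt_8_general k
end

section
/- Let G be a finite group in which every element is real (i.e. every g ∈ G is conjugate in G to g⁻¹), and let N be an odd positive integer. Then every g ∈ G can be written as g = x^N * y^N for some x, y ∈ G. -/
/-!
If `h` conjugates `g` to `g⁻¹`, then `(g * h)² = g (h g) h = h²`, so `h²` commutes with `g * h`
and hence with `g`. For odd `N = 2k + 1` this gives `(g * h) ^ N = h ^ (2k) * g * h = g * h ^ N`,
so `g = (g * h) ^ N * (h⁻¹) ^ N`.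
-/

section Group

variable {G : Type*} [Group G] {g h : G}

theorem mul_sq_eq_sq_of_conj_eq_inv (hg : h * g * h⁻¹ = g⁻¹) : (g * h) ^ 2 = h ^ 2 := by
  have hhg : h * g = g⁻¹ * h := mul_inv_eq_iff_eq_mul.mp hg
  rw [sq, sq, mul_assoc, ← mul_assoc h, hhg]
  group

theorem commute_sq_of_conj_eq_inv (hg : h * g * h⁻¹ = g⁻¹) : Commute (h ^ 2) g := by
  have hgh : Commute (h ^ 2) (g * h) := by
    rw [← mul_sq_eq_sq_of_conj_eq_inv hg]
    exact (Commute.refl _).pow_left 2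
  simpa using hgh.mul_right ((Commute.refl h).pow_left 2).inv_right

theorem mul_pow_eq_mul_pow_of_conj_eq_inv (hg : h * g * h⁻¹ = g⁻¹) {N : ℕ} (hN : Odd N) :
    (g * h) ^ N = g * h ^ N := by
  obtain ⟨k, rfl⟩ := hN
  calc (g * h) ^ (2 * k + 1) = (h ^ 2) ^ k * g * h := by
        rw [pow_succ, pow_mul, mul_sq_eq_sq_of_conj_eq_inv hg, mul_assoc]
    _ = g * (h ^ 2) ^ k * h := by rw [((commute_sq_of_conj_eq_inv hg).pow_left k).eq]
    _ = g * h ^ (2 * k + 1) := by rw [← pow_mul, mul_assoc, ← pow_succ]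

end Group

theorem stmt_10_general (G : Type*) [Group G]
    (hreal : ∀ g : G, ∃ x : G, x * g * x⁻¹ = g⁻¹)
    (N : ℕ) (hodd : Odd N) (g : G) :
    ∃ x y : G, x ^ N * y ^ N = g := by
  obtain ⟨h, hg⟩ := hreal g
  refine ⟨g * h, h⁻¹, ?_⟩
  rw [mul_pow_eq_mul_pow_of_conj_eq_inv hg hodd, inv_pow, mul_inv_cancel_right]

/-- If every element of the finite group `G` is real and `N` is odd, then the word map
`(x, y) ↦ x^N y^N` is surjective on `G`. -/
theorem stmt_10 (G : Type*) [Group G] [Finite G]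
    (hreal : ∀ g : G, ∃ x : G, x * g * x⁻¹ = g⁻¹)
    (N : ℕ) (hpos : 0 < N) (hodd : Odd N) (g : G) :
    ∃ x y : G, x ^ N * y ^ N = g :=
  stmt_10_general G hreal N hodd g
end

section
/- In the group G = SL₂(𝔽₅) of 2×2 matrices of determinant 1 over the field with 5 elements, no element of order 5 can be written as x^20 * y^20 with x, y ∈ G; in particular, the word map (x,y) ↦ x^20 y^20 is not surjective on SL₂(𝔽₅). -/
/-!
By Cayley–Hamilton every `x ∈ SL₂(𝔽₅)` satisfies `x² + 1 = t x` with `t = tr x`, and running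
through the five possible traces shows that `u = x²⁰` is either `1` or a root of `X² + X + 1`.
An element `g` of order 5 is unipotent, `(g - 1)² = 0`, because `(g - 1)⁵ = g⁵ - 1 = 0` in
characteristic 5. If `g = a b` with `a, b` each equal to `1` or a root of `X² + X + 1`, then
`n = a b - 1` satisfies `n a = m n` for some `m`, so `ker n` is `a`-invariant; if `n ≠ 0`, this
kernel is a line, spanned by an eigenvector of `a` whose eigenvalue would be a root of
`X² + X + 1` in `𝔽₅`. There is none, so `g = 1`.
-/

open Module
open scoped MatrixGroups

theorem pow_three_eq_one_of_sq_add_self_add_one_eq_zero {R : Type*} [Ring R] {a : R}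
    (ha : a ^ 2 + a + 1 = 0) : a ^ 3 = 1 :=
  calc a ^ 3 = (a - 1) * (a ^ 2 + a + 1) + 1 := by noncomm_ring
    _ = 1 := by rw [ha, mul_zero, zero_add]

theorem mul_sub_one_mul_eq_sq_mul_mul_sub_one {R : Type*} [Ring R] {a b : R}
    (ha : a ^ 2 + a + 1 = 0) (hb : b ^ 2 + b + 1 = 0) (h : (a * b - 1) ^ 2 = 0) :
    (a * b - 1) * a = a ^ 2 * (a * b - 1) := by
  have hb3 := pow_three_eq_one_of_sq_add_self_add_one_eq_zero hb
  have haba : a * b * a = 2 * a + b + 1 :=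
    calc a * b * a
        = (a * b - 1) ^ 2 * b ^ 2 + 2 * a * b ^ 3 - b ^ 2 - a * b * a * (b ^ 3 - 1) := by
          noncomm_ring
      _ = 2 * a + b + 1 - (b ^ 2 + b + 1) := by rw [h, hb3]; noncomm_ring
      _ = 2 * a + b + 1 := by rw [hb, sub_zero]
  calc (a * b - 1) * a = (b - a ^ 2) + (a ^ 2 + a + 1) := by rw [sub_mul, haba]; noncomm_ring
    _ = a ^ 3 * b - a ^ 2 := by
      rw [ha, pow_three_eq_one_of_sq_add_self_add_one_eq_zero ha]; noncomm_ring
    _ = a ^ 2 * (a * b - 1) := by noncomm_ring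

theorem pow_twenty_sq_add_pow_twenty_add_one_eq_zero {R : Type*} [Ring R] {a : R}
    (h : a ^ 4 + a ^ 2 + 1 = 0) : (a ^ 20) ^ 2 + a ^ 20 + 1 = 0 := by
  have h6 : a ^ 6 = 1 :=
    calc a ^ 6 = (a ^ 2 - 1) * (a ^ 4 + a ^ 2 + 1) + 1 := by noncomm_ring
      _ = 1 := by rw [h, mul_zero, zero_add]
  have h20 : a ^ 20 = a ^ 2 :=
    calc a ^ 20 = (a ^ 6) ^ 3 * a ^ 2 := by rw [← pow_mul, ← pow_add]
      _ = a ^ 2 := by rw [h6, one_pow, one_mul]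
  rwa [h20, ← pow_mul]

open Polynomial in
theorem Matrix.pow_card_eq_zero_of_isNilpotent {K n : Type*} [Field K] [Fintype n]
    [DecidableEq n] {N : Matrix n n K} (hN : IsNilpotent N) : N ^ Fintype.card n = 0 := by
  have hchar : N.charpoly = X ^ Fintype.card n :=
    sub_eq_zero.mp (Matrix.isNilpotent_charpoly_sub_pow_of_isNilpotent hN).eq_zero
  simpa [hchar] using N.aeval_self_charpoly

theorem Matrix.pow_char_eq_one_iff {K n : Type*} [Field K] (p : ℕ) [Fact p.Prime] [CharP K p]
    [Fintype n] [DecidableEq n] [Nonempty n] (hn : Fintype.card n ≤ p) (c : Matrix n n K) :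
    c ^ p = 1 ↔ (c - 1) ^ Fintype.card n = 0 := by
  have hfrob : (c - 1) ^ p = c ^ p - 1 := by
    simpa using sub_pow_char_of_commute (p := p) (Commute.one_right c)
  rw [← sub_eq_zero, ← hfrob]
  exact ⟨fun h ↦ pow_card_eq_zero_of_isNilpotent ⟨p, h⟩, fun h ↦ pow_eq_zero_of_le hn h⟩

open Polynomial in
theorem Matrix.sq_add_det_smul_one_eq_trace_smul {R : Type*} [CommRing R]
    (A : Matrix (Fin 2) (Fin 2) R) : A ^ 2 + A.det • 1 = A.trace • A := by
  nontriviality R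
  have h := A.aeval_self_charpoly
  simp only [charpoly_fin_two, map_sub, map_add, map_mul, map_pow, aeval_X, aeval_C,
    Algebra.algebraMap_eq_smul_one, smul_mul_assoc, one_mul] at h
  rw [← sub_eq_zero, ← h]
  abel

namespace Module.End

variable {K V : Type*} [Field K] [AddCommGroup V] [Module K V] [FiniteDimensional K V]

theorem finrank_ker_eq_one_of_sq_eq_zero (hV : finrank K V ≤ 2) {n : End K V}
    (hn0 : n ≠ 0) (hn : n ^ 2 = 0) : finrank K (LinearMap.ker n) = 1 := by
  have hrange : LinearMap.range n ≤ LinearMap.ker n :=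
    LinearMap.range_le_ker_iff.mpr (by rwa [sq] at hn)
  have hpos : finrank K (LinearMap.range n) ≠ 0 := by
    rwa [Ne, Submodule.finrank_eq_zero, LinearMap.range_eq_bot]
  have := Submodule.finrank_mono hrange
  have := n.finrank_range_add_finrank_ker
  omega

theorem exists_apply_eq_smul_of_sq_eq_zero (hV : finrank K V ≤ 2) {a m n : End K V}
    (hn0 : n ≠ 0) (hn : n ^ 2 = 0) (hna : n * a = m * n) : ∃ v ≠ 0, ∃ c : K, a v = c • v := by
  obtain ⟨w, hw0, hw⟩ := finrank_eq_one_iff'.mp (finrank_ker_eq_one_of_sq_eq_zero hV hn0 hn)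
  have haw : a w ∈ LinearMap.ker n := by
    rw [LinearMap.mem_ker, ← mul_apply, hna, mul_apply, LinearMap.mem_ker.mp w.2, map_zero]
  obtain ⟨c, hc⟩ := hw ⟨a w, haw⟩
  exact ⟨w, by simpa using hw0, c, congrArg Subtype.val hc.symm⟩

theorem eq_zero_of_sq_eq_zero (hK : ∀ c : K, c ^ 2 + c + 1 ≠ 0)
    (hV : finrank K V ≤ 2) {a m n : End K V} (ha : a ^ 2 + a + 1 = 0) (hn : n ^ 2 = 0)
    (hna : n * a = m * n) : n = 0 := by
  by_contra hn0
  obtain ⟨v, hv0, c, hc⟩ := exists_apply_eq_smul_of_sq_eq_zero hV hn0 hn hna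
  have hcv : (c ^ 2 + c + 1) • v = 0 := by
    simpa [sq, hc, add_smul, smul_smul] using congrArg (· v) ha
  exact hK c ((smul_eq_zero.mp hcv).resolve_right hv0)

end Module.End

namespace Matrix

variable {K : Type*} [Field K]

theorem eq_zero_of_sq_eq_zero (hK : ∀ c : K, c ^ 2 + c + 1 ≠ 0)
    {a m n : Matrix (Fin 2) (Fin 2) K} (ha : a ^ 2 + a + 1 = 0) (hn : n ^ 2 = 0)
    (hna : n * a = m * n) : n = 0 := by
  apply toLinAlgEquiv'.injective
  rw [map_zero]
  refine Module.End.eq_zero_of_sq_eq_zero hK (by simp) (a := toLinAlgEquiv' a)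
    (m := toLinAlgEquiv' m) ?_ ?_ ?_
  · simpa only [map_add, map_pow, map_one, map_zero] using congrArg toLinAlgEquiv' ha
  · simpa only [map_pow, map_zero] using congrArg toLinAlgEquiv' hn
  · simpa only [map_mul] using congrArg toLinAlgEquiv' hna

theorem mul_eq_one_of_sq_mul_sub_one_eq_zero (hK : ∀ c : K, c ^ 2 + c + 1 ≠ 0)
    {a b : Matrix (Fin 2) (Fin 2) K} (ha : a = 1 ∨ a ^ 2 + a + 1 = 0)
    (hb : b = 1 ∨ b ^ 2 + b + 1 = 0) (h : (a * b - 1) ^ 2 = 0) : a * b = 1 := by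
  rcases ha with rfl | ha <;> rcases hb with rfl | hb
  · exact one_mul 1
  · rw [one_mul] at h ⊢
    exact sub_eq_zero.mp (eq_zero_of_sq_eq_zero hK hb h (m := b) (by noncomm_ring))
  · rw [mul_one] at h ⊢
    exact sub_eq_zero.mp (eq_zero_of_sq_eq_zero hK ha h (m := a) (by noncomm_ring))
  · exact sub_eq_zero.mp
      (eq_zero_of_sq_eq_zero hK ha h (mul_sub_one_mul_eq_sq_mul_mul_sub_one ha hb h))

end Matrix

instance Nat.fact_prime_five : Fact (Nat.Prime 5) := ⟨Nat.prime_five⟩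

theorem Matrix.pow_twenty_eq_one_or_of_det_eq_one {A : Matrix (Fin 2) (Fin 2) (ZMod 5)}
    (hA : A.det = 1) : A ^ 20 = 1 ∨ (A ^ 20) ^ 2 + A ^ 20 + 1 = 0 := by
  have hCH : A ^ 2 + 1 = A.trace • A := by
    simpa [hA] using A.sq_add_det_smul_one_eq_trace_smul
  have hunip (B : Matrix (Fin 2) (Fin 2) (ZMod 5)) (hB : (B - 1) ^ 2 = 0) : B ^ 20 = 1 := by
    have hB5 : B ^ 5 = 1 := (pow_char_eq_one_iff 5 (by simp) B).mpr (by simpa using hB)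
    rw [show 20 = 5 * 4 from rfl, pow_mul, hB5, one_pow]
  have htrace : ∀ t : ZMod 5, t = 0 ∨ t ^ 2 = 1 ∨ t = 2 ∨ t = -2 := by decide
  generalize A.trace = t at hCH
  rcases htrace t with rfl | ht | rfl | rfl
  · left
    have hA2 : A ^ 2 = -1 := eq_neg_of_add_eq_zero_left (by simpa using hCH)
    rw [show 20 = 2 * 10 from rfl, pow_mul, hA2]
    norm_num
  · right
    apply pow_twenty_sq_add_pow_twenty_add_one_eq_zero
    calc A ^ 4 + A ^ 2 + 1 = (A ^ 2 + 1) ^ 2 - A ^ 2 := by noncomm_ring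
      _ = 0 := by rw [hCH, _root_.smul_pow, ht, one_smul, sub_self]
  · left
    refine hunip A ?_
    calc (A - 1) ^ 2 = A ^ 2 + 1 - (2 : ZMod 5) • A := by rw [two_smul]; noncomm_ring
      _ = 0 := by rw [hCH, sub_self]
  · left
    rw [← (by decide : Even 20).neg_pow]
    refine hunip (-A) ?_
    calc (-A - 1) ^ 2 = A ^ 2 + 1 + (2 : ZMod 5) • A := by rw [two_smul]; noncomm_ring
      _ = 0 := by rw [hCH, neg_smul, neg_add_cancel]

namespace Matrix.SpecialLinearGroup

theorem exists_orderOf_eq_five : ∃ g : SL(2, ZMod 5), orderOf g = 5 := by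
  let T : SL(2, ZMod 5) := ⟨!![1, 1; 0, 1], by simp [det_fin_two_of]⟩
  refine ⟨T, orderOf_eq_prime ?_ ?_⟩
  · apply Subtype.ext
    rw [coe_pow, coe_one]
    decide
  · intro h
    have h01 := congrArg (fun g : SL(2, ZMod 5) ↦ (g : Matrix (Fin 2) (Fin 2) (ZMod 5)) 0 1) h
    exact absurd h01 (by decide)

theorem pow_twenty_mul_pow_twenty_ne_of_orderOf_eq_five {g : SL(2, ZMod 5)}
    (hg : orderOf g = 5) (x y : SL(2, ZMod 5)) : x ^ 20 * y ^ 20 ≠ g := by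
  intro hxy
  have hunip : ((g : Matrix (Fin 2) (Fin 2) (ZMod 5)) - 1) ^ 2 = 0 := by
    have hg5 : g ^ 5 = 1 := orderOf_dvd_iff_pow_eq_one.mp hg.dvd
    simpa using (pow_char_eq_one_iff 5 (by simp) (g : Matrix (Fin 2) (Fin 2) (ZMod 5))).mp
      (by rw [← coe_pow, hg5, coe_one])
  have hg1 : g = 1 := by
    apply Subtype.ext
    rw [← hxy] at hunip ⊢
    simp only [coe_mul, coe_pow] at hunip ⊢
    -- `X ^ 2 + X + 1` has no root in `ZMod 5` because `-3` is not a square mod 5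
    exact mul_eq_one_of_sq_mul_sub_one_eq_zero (by decide)
      (pow_twenty_eq_one_or_of_det_eq_one x.2) (pow_twenty_eq_one_or_of_det_eq_one y.2) hunip
  subst hg1
  simp at hg

end Matrix.SpecialLinearGroup

/-- In `SL₂(𝔽₅)`, the word map `(x, y) ↦ x^20 y^20` misses every element of order `5`;
in particular it is not surjective. -/
theorem stmt_12 :
    (∀ g : Matrix.SpecialLinearGroup (Fin 2) (ZMod 5), orderOf g = 5 →
      ∀ x y : Matrix.SpecialLinearGroup (Fin 2) (ZMod 5), x ^ 20 * y ^ 20 ≠ g) ∧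
    ¬ (∀ g : Matrix.SpecialLinearGroup (Fin 2) (ZMod 5),
        ∃ x y : Matrix.SpecialLinearGroup (Fin 2) (ZMod 5), x ^ 20 * y ^ 20 = g) := by
  refine ⟨fun g hg ↦ Matrix.SpecialLinearGroup.pow_twenty_mul_pow_twenty_ne_of_orderOf_eq_five hg,
    fun hsurj ↦ ?_⟩
  obtain ⟨g, hg⟩ := Matrix.SpecialLinearGroup.exists_orderOf_eq_five
  obtain ⟨x, y, hxy⟩ := hsurj g
  exact Matrix.SpecialLinearGroup.pow_twenty_mul_pow_twenty_ne_of_orderOf_eq_five hg x y hxy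
end

section
/- For every integer n ≥ 5, every element of the alternating group A_n is a product of two 2-elements of A_n. -/
/-!
A cycle `(0 1 … l-1)` is the product of the reversals of `{0, …, l-1}` and `{0, …, l-2}`, so
every permutation is a product of two involutions supported in its support; the only issue is
parity. For a cycle of length other than `3` the sign of the first factor can be chosen freely:
for even length replace `g = x y` by `g = (x y x⁻¹) x`, for odd length `≥ 5` split off a
`4`-cycle. Two disjoint `3`-cycles also allow both signs, being a product of two `4`-cycles.
Hence a permutation is `1`, a `3`-cycle, or a product of two `2`-elements with even first factor,
and a single `3`-cycle `(a b c)` is `(a b)(d e) · (d e)(b c)` for two further points `d, e`.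
-/

open Equiv Equiv.Perm Finset Fin

def IsPElement {G : Type*} [Monoid G] (p : ℕ) (x : G) : Prop :=
  ∃ k, orderOf x = p ^ k

namespace IsPElement

variable {G : Type*} [Group G] {p : ℕ} {x y : G}

theorem of_pow_eq_one (hp : p.Prime) {k : ℕ} (h : x ^ p ^ k = 1) : IsPElement p x := by
  obtain ⟨i, -, hi⟩ := (Nat.dvd_prime_pow hp).1 (orderOf_dvd_of_pow_eq_one h)
  exact ⟨i, hi⟩

theorem of_mul_self_eq_one (h : x * x = 1) : IsPElement 2 x :=
  of_pow_eq_one (k := 1) Nat.prime_two (by rwa [pow_one, sq])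

theorem mul (hp : p.Prime) (hxy : Commute x y) (hx : IsPElement p x) (hy : IsPElement p y) :
    IsPElement p (x * y) := by
  obtain ⟨i, hi⟩ := hx
  obtain ⟨j, hj⟩ := hy
  have hdvd : orderOf (x * y) ∣ p ^ (i + j) := by
    rw [pow_add, ← hi, ← hj]
    exact hxy.orderOf_mul_dvd_mul_orderOf
  obtain ⟨k, -, hk⟩ := (Nat.dvd_prime_pow hp).1 hdvd
  exact ⟨k, hk⟩

theorem conj (c : G) (hx : IsPElement p x) : IsPElement p (c * x * c⁻¹) := by
  obtain ⟨k, hk⟩ := hx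
  exact ⟨k, (orderOf_injective (MulAut.conj c).toMonoidHom (MulEquiv.injective _) x).trans hk⟩

end IsPElement

section

variable {α : Type*} [DecidableEq α] [Fintype α]

theorem Equiv.Perm.sign_conj (c x : Perm α) : sign (c * x * c⁻¹) = sign x := by
  rw [map_mul, map_mul, map_inv, mul_inv_cancel_comm]

theorem Equiv.Perm.support_subset_support_iff {x g : Perm α} :
    x.support ⊆ g.support ↔ ∀ a, g a = a → x a = a := by
  simp only [Finset.subset_iff, mem_support]
  exact forall_congr' fun a => not_imp_not

/-- Confining both factors to the support of `g` is what allows factorizations of disjoint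
permutations to be multiplied. -/
def HasTwoFactorization (g : Perm α) (ε : ℤˣ) : Prop :=
  ∃ x y : Perm α, x * y = g ∧ x.support ⊆ g.support ∧ y.support ⊆ g.support ∧
    IsPElement 2 x ∧ IsPElement 2 y ∧ sign x = ε

namespace HasTwoFactorization

variable {g h : Perm α} {ε δ : ℤˣ}

theorem of_isConj (hg : HasTwoFactorization g ε) (hgh : IsConj g h) :
    HasTwoFactorization h ε := by
  obtain ⟨c, rfl⟩ := isConj_iff.1 hgh
  obtain ⟨x, y, rfl, hx, hy, hx2, hy2, rfl⟩ := hg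
  refine ⟨c * x * c⁻¹, c * y * c⁻¹, by group, ?_, ?_, hx2.conj c, hy2.conj c,
    sign_conj c x⟩
  · simpa only [support_conj] using Finset.map_subset_map.2 hx
  · simpa only [support_conj] using Finset.map_subset_map.2 hy

theorem sign_mul (hg : HasTwoFactorization g ε) : HasTwoFactorization g (sign g * ε) := by
  obtain ⟨x, y, rfl, hx, hy, hx2, hy2, rfl⟩ := hg
  refine ⟨x * y * x⁻¹, x, by group, ?_, hx, hy2.conj x, hx2, ?_⟩
  · rw [support_conj]
    intro a ha
    obtain ⟨b, hb, rfl⟩ := Finset.mem_map.1 ha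
    by_cases hbx : b ∈ x.support
    · exact hx (apply_mem_support.2 hbx)
    · rw [Equiv.coe_toEmbedding, notMem_support.1 hbx]
      exact hy hb
  · rw [sign_conj, map_mul, mul_right_comm, Int.units_mul_self, one_mul]

theorem mul_of_disjoint (hgh : Disjoint g h) (hg : HasTwoFactorization g ε)
    (hh : HasTwoFactorization h δ) : HasTwoFactorization (g * h) (ε * δ) := by
  obtain ⟨x, y, rfl, hx, hy, hx2, hy2, rfl⟩ := hg
  obtain ⟨x', y', rfl, hx', hy', hx2', hy2', rfl⟩ := hh
  have hdisj {u v : Perm α} (hu : u.support ⊆ (x * y).support)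
      (hv : v.support ⊆ (x' * y').support) : Disjoint u v :=
    disjoint_iff_disjoint_support.2 <|
      Finset.disjoint_of_subset_left hu <| Finset.disjoint_of_subset_right hv <|
        disjoint_iff_disjoint_support.1 hgh
  refine ⟨x * x', y * y', ?_, ?_, ?_, hx2.mul Nat.prime_two (hdisj hx hx').commute hx2',
    hy2.mul Nat.prime_two (hdisj hy hy').commute hy2', map_mul _ _ _⟩
  · rw [mul_assoc, ← mul_assoc x', (hdisj hy hx').commute.symm.eq, mul_assoc, mul_assoc]
  · rw [hgh.support_mul]
    exact (support_mul_le _ _).trans (Finset.union_subset_union hx hx')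
  · rw [hgh.support_mul]
    exact (support_mul_le _ _).trans (Finset.union_subset_union hy hy')

theorem forall_of_neg (h₁ : HasTwoFactorization g ε) (h₂ : HasTwoFactorization g (-ε)) :
    ∀ δ, HasTwoFactorization g δ := by
  intro δ
  rcases Int.units_eq_one_or ε with rfl | rfl <;> rcases Int.units_eq_one_or δ with rfl | rfl <;>
    simp_all

theorem forall_mul_of_disjoint (hgh : Disjoint g h) (hg : ∀ ε, HasTwoFactorization g ε)
    (hh : HasTwoFactorization h δ) : ∀ ε, HasTwoFactorization (g * h) ε := fun ε => by
  simpa [mul_assoc] using (hg (ε * δ)).mul_of_disjoint hgh hh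

end HasTwoFactorization

theorem Equiv.Perm.IsThreeCycle.exists_mul_eq_of_five_le_card {g : Perm α} (hg : g.IsThreeCycle)
    (hα : 5 ≤ Fintype.card α) :
    ∃ x y : Perm α, IsPElement 2 x ∧ IsPElement 2 y ∧ Perm.sign x = 1 ∧ x * y = g := by
  obtain ⟨a, ha⟩ : g.support.Nonempty := Finset.card_pos.1 (by rw [hg.card_support]; norm_num)
  obtain ⟨d, hd, e, he, hde⟩ := Finset.one_lt_card.1 <| show 1 < #g.supportᶜ by
    rw [card_compl, hg.card_support]
    omega
  rw [mem_compl] at hd he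
  have hb : g a ∈ g.support := apply_mem_support.2 ha
  have hc : g (g a) ∈ g.support := apply_mem_support.2 hb
  have hcomm {u v : α} (hu : u ∈ g.support) (hv : v ∈ g.support) (huv : u ≠ v) :
      Commute (swap u v) (swap d e) :=
    (disjoint_swap_swap <| by
      simp [*, ne_of_mem_of_not_mem hu, ne_of_mem_of_not_mem hv]).commute
  have hswap {u v : α} : IsPElement 2 (swap u v) := .of_mul_self_eq_one (swap_mul_self u v)
  have hab : a ≠ g a := fun h => mem_support.1 ha h.symm
  have hbc : g a ≠ g (g a) := fun h => mem_support.1 hb h.symm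
  refine ⟨swap a (g a) * swap d e, swap d e * swap (g a) (g (g a)),
    hswap.mul Nat.prime_two (hcomm ha hb hab) hswap,
    hswap.mul Nat.prime_two (hcomm hb hc hbc).symm hswap, ?_, ?_⟩
  · rw [map_mul, sign_swap hab, sign_swap hde]
    rfl
  · rw [mul_assoc, ← mul_assoc (swap d e), swap_mul_self, one_mul,
      ← hg.eq_swap_mul_swap_iff_mem_support.2 ha]

end

section

variable {n : ℕ}

theorem Fin.val_cycleIcc_mk {a b : ℕ} (hab : a ≤ b) (hb : b < n) (k : Fin n) :
    (cycleIcc ⟨a, by omega⟩ ⟨b, hb⟩ k : ℕ) =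
      if a ≤ k ∧ (k : ℕ) < b then (k : ℕ) + 1 else if (k : ℕ) = b then a else k := by
  have : NeZero n := NeZero.of_pos k.pos
  rcases lt_or_ge (k : ℕ) a with hka | hak
  · rw [cycleIcc_of_lt (Fin.mk_lt_mk.2 hka), if_neg (by omega), if_neg (by omega)]
  rcases lt_or_ge b k with hbk | hkb
  · rw [cycleIcc_of_gt (Fin.mk_lt_mk.2 hbk), if_neg (by omega), if_neg (by omega)]
  rcases Nat.lt_or_eq_of_le hkb with hkb' | hkb'
  · rw [cycleIcc_of_ge_of_lt (Fin.le_def.2 hak) (Fin.lt_def.2 hkb'), if_pos ⟨hak, hkb'⟩]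
    exact Fin.val_add_one_of_lt' (by omega)
  · obtain rfl : k = ⟨b, hb⟩ := Fin.ext hkb'
    rw [cycleIcc_of_last (Fin.mk_le_mk.2 hab), if_neg (by omega), if_pos rfl]

/-- Reverses `{0, …, b}`; the identity when `n ≤ b`. -/
def revIic (n b : ℕ) : Perm (Fin n) :=
  Function.Involutive.toPerm
    (fun j => if h : (j : ℕ) ≤ b ∧ b < n then ⟨b - j, by omega⟩ else j)
    (fun j => by
      by_cases h : (j : ℕ) ≤ b ∧ b < n
      · simp only [dif_pos h]
        rw [dif_pos (by simp; omega)]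
        ext; simp; omega
      · simp only [dif_neg h])

theorem val_revIic {b : ℕ} (hb : b < n) (j : Fin n) :
    (revIic n b j : ℕ) = if (j : ℕ) ≤ b then b - j else j := by
  by_cases h : (j : ℕ) ≤ b <;> simp [revIic, h, hb]

theorem revIic_mul_self (b : ℕ) : revIic n b * revIic n b = 1 :=
  Equiv.ext (Function.Involutive.toPerm_involutive _)

theorem revIic_zero : revIic n 0 = 1 := by
  ext j
  simp only [val_revIic j.pos, Perm.one_apply]
  split_ifs <;> omega

theorem revIic_succ_mul_revIic {b : ℕ} (hb : b + 1 < n) :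
    revIic n (b + 1) * revIic n b = cycleIcc ⟨0, by omega⟩ ⟨b + 1, hb⟩ := by
  ext j
  simp (disch := omega) only [Perm.mul_apply, val_revIic, Fin.val_cycleIcc_mk]
  split_ifs <;> omega

theorem sign_revIic {b : ℕ} (hb : b < n) : sign (revIic n b) = (-1) ^ ((b + 1) / 2) := by
  induction b with
  | zero => simp [revIic_zero]
  | succ b ih =>
    have hrev : revIic n (b + 1) = cycleIcc ⟨0, by omega⟩ ⟨b + 1, hb⟩ * revIic n b := by
      rw [← revIic_succ_mul_revIic hb, mul_assoc, revIic_mul_self, mul_one]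
    rw [hrev, map_mul, sign_cycleIcc_of_le (Fin.le_def.2 (Nat.zero_le _)), ih (by omega),
      ← pow_add, Int.units_pow_eq_pow_mod_two, Int.units_pow_eq_pow_mod_two _ ((b + 1 + 1) / 2)]
    congr 1
    dsimp only
    rcases Nat.even_or_odd' b with ⟨k, rfl | rfl⟩ <;> omega

theorem isPElement_two_cycleIcc {a b : ℕ} (hab : a + 3 = b) (hb : b < n) :
    IsPElement 2 (cycleIcc ⟨a, by omega⟩ ⟨b, hb⟩) := by
  refine ⟨2, ?_⟩
  rw [← lcm_cycleType, cycleType_cycleIcc_of_lt (Fin.lt_def.2 (by simp; omega))]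
  simp
  omega

theorem hasTwoFactorization_cycleIcc_zero {b : ℕ} (hb : b + 1 < n) :
    HasTwoFactorization (cycleIcc ⟨0, by omega⟩ ⟨b + 1, hb⟩) ((-1) ^ ((b + 2) / 2)) := by
  refine ⟨revIic n (b + 1), revIic n b, revIic_succ_mul_revIic hb, ?_, ?_,
    .of_mul_self_eq_one (revIic_mul_self _), .of_mul_self_eq_one (revIic_mul_self _),
    sign_revIic hb⟩ <;>
  · refine support_subset_support_iff.2 fun j hj => Fin.ext ?_
    rw [Fin.ext_iff] at hj
    simp (disch := omega) only [val_revIic, Fin.val_cycleIcc_mk] at hj ⊢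
    split_ifs at hj ⊢ <;> omega

/-- `(0 … b+4) = (0 … b+1) (b+1 … b+4)`, and the first factor is `revIic (b+1) * revIic b`. -/
theorem hasTwoFactorization_cycleIcc_zero_add_four {b : ℕ} (hb : b + 4 < n) :
    HasTwoFactorization (cycleIcc ⟨0, by omega⟩ ⟨b + 4, hb⟩) ((-1) ^ ((b + 2) / 2)) := by
  have hcomm : Commute (revIic n b) (cycleIcc ⟨b + 1, by omega⟩ ⟨b + 4, hb⟩) := by
    ext j
    simp (disch := omega) only [Perm.mul_apply, val_revIic, Fin.val_cycleIcc_mk]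
    split_ifs <;> omega
  refine ⟨revIic n (b + 1), revIic n b * cycleIcc ⟨b + 1, by omega⟩ ⟨b + 4, hb⟩, ?_, ?_, ?_,
    .of_mul_self_eq_one (revIic_mul_self _),
    (IsPElement.of_mul_self_eq_one (revIic_mul_self _)).mul Nat.prime_two hcomm
      (isPElement_two_cycleIcc rfl hb),
    sign_revIic (by omega)⟩
  · ext j
    simp (disch := omega) only [Perm.mul_apply, val_revIic, Fin.val_cycleIcc_mk]
    split_ifs <;> omega
  all_goals
    refine support_subset_support_iff.2 fun j hj => Fin.ext ?_
    rw [Fin.ext_iff] at hj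
    simp (disch := omega) only [Perm.mul_apply, val_revIic, Fin.val_cycleIcc_mk] at hj ⊢
    split_ifs at hj ⊢ <;> omega

/-- `(0 1 2) (3 4 5) = (0 1 2 3) (2 3 4 5)`. -/
theorem hasTwoFactorization_cycleIcc_mul_cycleIcc (hn : 6 ≤ n) :
    HasTwoFactorization
      (cycleIcc (⟨0, by omega⟩ : Fin n) ⟨2, by omega⟩ * cycleIcc ⟨3, by omega⟩ ⟨5, by omega⟩)
      (-1) := by
  refine ⟨cycleIcc ⟨0, by omega⟩ ⟨3, by omega⟩, cycleIcc ⟨2, by omega⟩ ⟨5, by omega⟩,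
    ?_, ?_, ?_, isPElement_two_cycleIcc rfl _, isPElement_two_cycleIcc rfl _, ?_⟩
  · ext j
    simp (disch := omega) only [Perm.mul_apply, Fin.val_cycleIcc_mk]
    split_ifs <;> omega
  rotate_right
  · rw [sign_cycleIcc_of_le (Fin.le_def.2 (by simp))]
    norm_num
  all_goals
    refine support_subset_support_iff.2 fun j hj => Fin.ext ?_
    rw [Fin.ext_iff] at hj
    simp (disch := omega) only [Perm.mul_apply, Fin.val_cycleIcc_mk] at hj ⊢
    split_ifs at hj ⊢ <;> omega

theorem isConj_cycleIcc_zero {c : Perm (Fin n)} (hc : c.IsCycle) {b : ℕ} (hb : b + 1 < n)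
    (hcb : #c.support = b + 2) : IsConj (cycleIcc ⟨0, by omega⟩ ⟨b + 1, hb⟩) c := by
  rw [isConj_iff_cycleType_eq, cycleType_cycleIcc_of_lt (Fin.lt_def.2 (by simp)), hc.cycleType,
    hcb]
  simp

theorem Equiv.Perm.IsCycle.exists_card_support_eq {c : Perm (Fin n)} (hc : c.IsCycle) :
    ∃ b, b + 1 < n ∧ #c.support = b + 2 := by
  have := card_le_univ c.support
  have := hc.two_le_card_support
  simp only [Fintype.card_fin] at *
  exact ⟨#c.support - 2, by omega, by omega⟩

theorem Equiv.Perm.IsCycle.hasTwoFactorization {c : Perm (Fin n)} (hc : c.IsCycle) :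
    HasTwoFactorization c ((-1) ^ (#c.support / 2)) := by
  obtain ⟨b, hb, hcb⟩ := hc.exists_card_support_eq
  rw [hcb]
  exact (hasTwoFactorization_cycleIcc_zero hb).of_isConj (isConj_cycleIcc_zero hc hb hcb)

theorem Equiv.Perm.IsCycle.forall_hasTwoFactorization {c : Perm (Fin n)} (hc : c.IsCycle)
    (h3 : #c.support ≠ 3) : ∀ ε, HasTwoFactorization c ε := by
  have h := hc.hasTwoFactorization
  refine h.forall_of_neg ?_
  obtain ⟨b, hb, hcb⟩ := hc.exists_card_support_eq
  rcases Nat.even_or_odd #c.support with heven | hodd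
  · simpa [hc.sign, heven.neg_one_pow] using h.sign_mul
  · obtain ⟨k, rfl⟩ : ∃ k, b = 2 * k + 3 := by
      obtain ⟨k, hk⟩ := hodd
      exact ⟨k - 2, by omega⟩
    have h' := (hasTwoFactorization_cycleIcc_zero_add_four (b := 2 * k) (by omega)).of_isConj
      (isConj_cycleIcc_zero hc hb hcb)
    convert h' using 1
    rw [hcb, show (2 * k + 3 + 2) / 2 = (2 * k + 2) / 2 + 1 by omega, pow_succ, mul_neg_one,
      neg_neg]

theorem Equiv.Perm.IsThreeCycle.forall_hasTwoFactorization_mul {c d : Perm (Fin n)}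
    (hc : c.IsThreeCycle) (hd : d.IsThreeCycle) (hcd : Disjoint c d) :
    ∀ ε, HasTwoFactorization (c * d) ε := by
  have h₁ := hc.isCycle.hasTwoFactorization.mul_of_disjoint hcd hd.isCycle.hasTwoFactorization
  rw [hc.card_support, hd.card_support] at h₁
  have hn : 6 ≤ n := by
    have := card_le_univ (c.support ∪ d.support)
    rwa [card_union_of_disjoint (disjoint_iff_disjoint_support.1 hcd), hc.card_support,
      hd.card_support, Fintype.card_fin] at this
  have hmodel : Disjoint (cycleIcc (⟨0, by omega⟩ : Fin n) ⟨2, by omega⟩)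
      (cycleIcc ⟨3, by omega⟩ ⟨5, by omega⟩) := by
    intro j
    simp (disch := omega) only [Fin.ext_iff, Fin.val_cycleIcc_mk]
    split_ifs <;> omega
  have h₂ : HasTwoFactorization (c * d) (-1) :=
    (hasTwoFactorization_cycleIcc_mul_cycleIcc hn).of_isConj <| by
      rw [isConj_iff_cycleType_eq, hmodel.cycleType_mul, hcd.cycleType_mul, hc.cycleType,
        hd.cycleType, cycleType_cycleIcc_of_lt (Fin.lt_def.2 (by simp)),
        cycleType_cycleIcc_of_lt (Fin.lt_def.2 (by simp))]
      rfl
  exact h₁.forall_of_neg (by simpa using h₂)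

theorem Equiv.Perm.IsCycle.isThreeCycle_or_forall_hasTwoFactorization {c : Perm (Fin n)}
    (hc : c.IsCycle) : c.IsThreeCycle ∨ ∀ ε, HasTwoFactorization c ε := by
  by_cases h3 : #c.support = 3
  · exact .inl (card_support_eq_three_iff.1 h3)
  · exact .inr (hc.forall_hasTwoFactorization h3)

theorem eq_one_or_isThreeCycle_or_forall_hasTwoFactorization (g : Perm (Fin n)) :
    g = 1 ∨ g.IsThreeCycle ∨ ∀ ε, HasTwoFactorization g ε := by
  induction g using cycle_induction_on with
  | base_one => exact .inl rfl
  | base_cycles c hc => exact .inr hc.isThreeCycle_or_forall_hasTwoFactorization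
  | induction_disjoint c g hcg hc _ ihg =>
    rcases ihg with rfl | hg | hg
    · rw [mul_one]
      exact .inr hc.isThreeCycle_or_forall_hasTwoFactorization
    · refine .inr (.inr ?_)
      rcases hc.isThreeCycle_or_forall_hasTwoFactorization with hc3 | hc'
      · exact hc3.forall_hasTwoFactorization_mul hg hcg
      · exact .forall_mul_of_disjoint hcg hc' hg.isCycle.hasTwoFactorization
    · refine .inr (.inr ?_)
      rw [hcg.commute.eq]
      exact .forall_mul_of_disjoint hcg.symm hg hc.hasTwoFactorization

end

/-- For `n ≥ 5`, every element of the alternating group `A_n` is a product of two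
`2`-elements. -/
theorem stmt_15 (n : ℕ) (hn : 5 ≤ n) (g : alternatingGroup (Fin n)) :
    ∃ x y : alternatingGroup (Fin n),
      (∃ i, orderOf x = 2 ^ i) ∧ (∃ j, orderOf y = 2 ^ j) ∧ g = x * y := by
  suffices ∃ x y : Perm (Fin n), IsPElement 2 x ∧ IsPElement 2 y ∧ sign x = 1 ∧ x * y = g by
    obtain ⟨x, y, hx, hy, hsx, hxy⟩ := this
    have hsy : sign y = 1 := by
      simpa [← hxy, hsx] using mem_alternatingGroup.1 g.2
    exact ⟨⟨x, hsx⟩, ⟨y, hsy⟩, hx.imp fun _ ↦ (Subgroup.orderOf_mk x hsx).trans,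
      hy.imp fun _ ↦ (Subgroup.orderOf_mk y hsy).trans, Subtype.ext hxy.symm⟩
  rcases eq_one_or_isThreeCycle_or_forall_hasTwoFactorization (g : Perm (Fin n)) with h1 | h3 | h
  · exact ⟨1, 1, ⟨0, by simp⟩, ⟨0, by simp⟩, sign_one, by rw [h1, mul_one]⟩
  · exact h3.exists_mul_eq_of_five_le_card (by simpa)
  · obtain ⟨x, y, hxy, -, -, hx, hy, hsx⟩ := h 1
    exact ⟨x, y, hx, hy, hsx, hxy⟩
end

section
/- Let n ≥ 7 and let x ∈ GL_n(𝔽₃) be unbreakable, meaning that there is no direct sum decomposition 𝔽₃ⁿ = U ⊕ W into two nonzero x-invariant subspaces U and W with dim U ≠ 2 and dim W ≠ 2. Then the centralizer of x in GL_n(𝔽₃) has order at most 3^{n+2} · 2⁴. -/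
/-!
Through `x`, `V = 𝔽₃ⁿ` is a torsion `𝔽₃[X]`-module, hence a direct sum of cyclic modules
`Aᵢ = 𝔽₃[X] ⧸ (pᵢ ^ eᵢ)` of dimensions `dᵢ`. Regrouping the summands along any splitting of the
index set gives an `x`-invariant decomposition of `V`, so unbreakability forces one of the two
groups to have dimension `0` or `2`. For `n ≥ 7` this leaves at most two nonzero `dᵢ`, and if
there are two, one of them is at most `2`. The centralizer of `x` embeds into
`End_{𝔽₃[X]} V = ⨁ Hom(Aᵢ, Aⱼ)`, and `dim Hom(Aᵢ, Aⱼ) ≤ min dᵢ dⱼ`, so it has dimension at most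
`n + 4`; hence `|C(x)| ≤ 3 ^ (n + 4) ≤ 3 ^ (n + 2) · 2 ^ 4`.
-/
open Module Polynomial LinearMap Finset

section CyclicHom
variable {K R B : Type*} [Field K] [CommRing R] [Algebra K R]
  [AddCommGroup B] [Module R B] [Module K B] [IsScalarTower K R B] [FiniteDimensional K B]

lemma finrank_ker_eq_finrank_quotient_range {V : Type*} [AddCommGroup V] [Module K V]
    [FiniteDimensional K V] (T : V →ₗ[K] V) :
    finrank K (ker T) = finrank K (V ⧸ range T) := by
  have := T.finrank_range_add_finrank_ker
  have := (range T).finrank_quotient_add_finrank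
  omega

lemma finrank_hom_quotient_span_singleton_le_finrank_ker (a : R) :
    finrank K ((R ⧸ R ∙ a) →ₗ[R] B) ≤
      finrank K (ker (DistribSMul.toLinearMap K B (S := R) a)) := by
  let ev : ((R ⧸ R ∙ a) →ₗ[R] B) →ₗ[K] B := applyₗ' K (Submodule.Quotient.mk 1)
  have hev : Function.Injective ev := fun φ ψ h =>
    Submodule.linearMap_qext _ (LinearMap.ext_ring h)
  rw [← finrank_range_of_inj hev]
  refine Submodule.finrank_mono ?_
  rintro _ ⟨φ, rfl⟩
  change a • φ (Submodule.Quotient.mk 1) = 0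
  rw [← map_smul, ← Submodule.Quotient.mk_smul, smul_eq_mul, mul_one,
    (Submodule.Quotient.mk_eq_zero _).2 (Submodule.mem_span_singleton_self a), map_zero]

-- Rank–nullity turns `ker (a • ·)` into `B ⧸ aB`, a quotient of `R ⧸ (a)` since `B` is cyclic.
lemma finrank_ker_smul_le_of_span_singleton_eq_top (a : R)
    [FiniteDimensional K (R ⧸ R ∙ a)] {g : B} (hg : R ∙ g = ⊤) :
    finrank K (ker (DistribSMul.toLinearMap K B (S := R) a)) ≤ finrank K (R ⧸ R ∙ a) := by
  rw [finrank_ker_eq_finrank_quotient_range]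
  let T := DistribSMul.toLinearMap K B (S := R) a
  let q : R →ₗ[K] B ⧸ range T := (range T).mkQ ∘ₗ (toSpanSingleton R B g).restrictScalars K
  have hq : ((R ∙ a).restrictScalars K) ≤ ker q := by
    intro r hr
    obtain ⟨c, rfl⟩ := Submodule.mem_span_singleton.1 hr
    simp [q, T, mul_smul, smul_comm c a]
  refine finrank_le_finrank_of_surjective (f := ((R ∙ a).restrictScalars K).liftQ q hq ∘ₗ
    (Submodule.Quotient.restrictScalarsEquiv K (R ∙ a)).symm.toLinearMap) ?_
  rintro ⟨b⟩
  obtain ⟨r, rfl⟩ := Submodule.mem_span_singleton.1 (hg ▸ Submodule.mem_top : b ∈ R ∙ g)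
  exact ⟨Submodule.Quotient.mk r, rfl⟩

lemma span_singleton_mk_one_eq_top (I : Submodule R R) :
    R ∙ (Submodule.Quotient.mk 1 : R ⧸ I) = ⊤ := by
  refine eq_top_iff.2 fun b _ => ?_
  obtain ⟨r, rfl⟩ := Submodule.Quotient.mk_surjective I b
  exact Submodule.mem_span_singleton.2
    ⟨r, by rw [← Submodule.Quotient.mk_smul, smul_eq_mul, mul_one]⟩

lemma finrank_hom_quotient_span_singleton_le_min (a b : R)
    [FiniteDimensional K (R ⧸ R ∙ a)] [FiniteDimensional K (R ⧸ R ∙ b)] :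
    finrank K ((R ⧸ R ∙ a) →ₗ[R] (R ⧸ R ∙ b)) ≤
      min (finrank K (R ⧸ R ∙ a)) (finrank K (R ⧸ R ∙ b)) :=
  le_min
    ((finrank_hom_quotient_span_singleton_le_finrank_ker a).trans
      (finrank_ker_smul_le_of_span_singleton_eq_top a (span_singleton_mk_one_eq_top _)))
    ((finrank_hom_quotient_span_singleton_le_finrank_ker a).trans (Submodule.finrank_le _))

end CyclicHom

section Combinatorics
variable {ι : Type*} [Fintype ι] [DecidableEq ι] {D : ι → ℕ}

lemma card_support_le_two (hD : 7 ≤ ∑ i, D i)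
    (H : ∀ s : Finset ι, ∑ i ∈ s, D i = 0 ∨ ∑ i ∈ sᶜ, D i = 0 ∨
      ∑ i ∈ s, D i = 2 ∨ ∑ i ∈ sᶜ, D i = 2) :
    #{i | D i ≠ 0} ≤ 2 := by
  by_contra! h
  obtain ⟨a, ha, b, hb, c, hc, hab, hac, hbc⟩ := two_lt_card.1 h
  simp only [mem_filter, mem_univ, true_and] at ha hb hc
  have habc : D a + D b + D c ≤ ∑ i, D i := by
    have : ∑ i ∈ {a, b, c}, D i = D a + D b + D c := by
      rw [sum_insert (by simp [hab, hac]), sum_pair hbc, add_assoc]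
    exact this ▸ sum_le_sum_of_subset (subset_univ _)
  have := H {a}; have := H {b}; have := H {a, b}
  have := sum_add_sum_compl {a} D; have := sum_add_sum_compl {b} D
  have := sum_add_sum_compl {a, b} D
  simp only [sum_singleton, sum_pair hab] at *
  omega

theorem sum_sum_min_le (hD : 7 ≤ ∑ i, D i)
    (H : ∀ s : Finset ι, ∑ i ∈ s, D i = 0 ∨ ∑ i ∈ sᶜ, D i = 0 ∨
      ∑ i ∈ s, D i = 2 ∨ ∑ i ∈ sᶜ, D i = 2) :
    ∑ i, ∑ j, min (D i) (D j) ≤ ∑ i, D i + 4 := by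
  set S : Finset ι := {i | D i ≠ 0}
  have hS : ∀ g : ι → ℕ, (∀ i, D i = 0 → g i = 0) → ∑ i, g i = ∑ i ∈ S, g i := fun g hg =>
    (sum_subset (subset_univ S) fun i _ hi => hg i (by simpa [S] using hi)).symm
  rw [hS _ fun i hi => sum_eq_zero fun j _ => by simp [hi],
    sum_congr rfl fun i _ => hS _ fun j hj => by simp [hj], hS D fun i hi => hi]
  have := card_support_le_two hD H
  interval_cases h : #S
  · simp [card_eq_zero.1 h]
  · obtain ⟨a, hSa⟩ := card_eq_one.1 h
    simp [hSa]
  · obtain ⟨a, b, hab, hSab⟩ := card_eq_two.1 h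
    have := H {a}
    have := sum_add_sum_compl {a} D
    rw [hS D fun i hi => hi, hSab] at this
    simp only [hSab, sum_pair hab, sum_singleton] at *
    omega

end Combinatorics

section PiSplitting
variable {K R : Type*} [Field K] [Ring R] [Algebra K R]
  {ι : Type*} [DecidableEq ι] (A : ι → Type*)
  [∀ i, AddCommGroup (A i)] [∀ i, Module R (A i)]

lemma isCompl_iSup_range_single [Finite ι] (I : Set ι) :
    IsCompl (⨆ i ∈ I, range (single R A i)) (⨆ i ∈ Iᶜ, range (single R A i)) :=
  ⟨disjoint_single_single R A I Iᶜ disjoint_compl_right, codisjoint_iff.2 <| by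
    rw [← _root_.iSup_union, Set.union_compl_self, iSup_univ, iSup_range_single]⟩

variable [∀ i, Module K (A i)] [∀ i, IsScalarTower K R (A i)] [∀ i, FiniteDimensional K (A i)]

lemma finrank_iSup_range_single (s : Finset ι) :
    finrank K (⨆ i ∈ (s : Set ι), range (single R A i) : Submodule R (∀ i, A i)) =
      ∑ i ∈ s, finrank K (A i) := by
  rw [iSup_range_single_eq_iInf_ker_proj R A isCompl_compl s.finite_toSet,
    ((iInfKerProjEquiv R A isCompl_compl.disjoint (by simp)).restrictScalars K).finrank_eq,
    finrank_pi_fintype, ← s.sum_coe_sort]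
  rfl

lemma finrank_end_pi [Fintype ι] :
    finrank K (Module.End R (∀ i, A i)) = ∑ i, ∑ j, finrank K (A i →ₗ[R] A j) := by
  rw [← (lsum R A K).finrank_eq, finrank_pi_fintype]
  refine sum_congr rfl fun i _ => ?_
  rw [← (LinearEquiv.linearMapPi K).finrank_eq, finrank_pi_fintype]

end PiSplitting

section Unbreakable
variable {K R M : Type*} [Field K] [Ring R] [Algebra K R]
  [AddCommGroup M] [Module R M] [Module K M] [IsScalarTower K R M]

variable (K R M) in
def IsUnbreakable : Prop :=
  ∀ P Q : Submodule R M, IsCompl P Q →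
    finrank K P = 0 ∨ finrank K Q = 0 ∨ finrank K P = 2 ∨ finrank K Q = 2

lemma IsUnbreakable.sum_finrank_eq_zero_or_two {ι : Type*} [Fintype ι] [DecidableEq ι]
    {A : ι → Type*} [∀ i, AddCommGroup (A i)] [∀ i, Module R (A i)] [∀ i, Module K (A i)]
    [∀ i, IsScalarTower K R (A i)] [∀ i, FiniteDimensional K (A i)]
    (h : IsUnbreakable K R M) (ψ : M ≃ₗ[R] ∀ i, A i) (s : Finset ι) :
    ∑ i ∈ s, finrank K (A i) = 0 ∨ ∑ i ∈ sᶜ, finrank K (A i) = 0 ∨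
      ∑ i ∈ s, finrank K (A i) = 2 ∨ ∑ i ∈ sᶜ, finrank K (A i) = 2 := by
  have hP (t : Finset ι) : finrank K (Submodule.orderIsoMapComap ψ.symm
      (⨆ i ∈ (t : Set ι), range (single R A i))) = ∑ i ∈ t, finrank K (A i) := by
    rw [← finrank_iSup_range_single (R := R) A t]
    exact ((ψ.symm.submoduleMap _).restrictScalars K).finrank_eq.symm
  have hc := (Submodule.orderIsoMapComap ψ.symm).isCompl (isCompl_iSup_range_single A s)
  rw [← coe_compl] at hc
  simpa only [hP] using h _ _ hc

lemma isUnbreakable_aeval' {V : Type*} [AddCommGroup V] [Module K V] (f : Module.End K V)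
    (hf : ∀ U W : Submodule K V, IsCompl U W → U ∈ f.invtSubmodule → W ∈ f.invtSubmodule →
      finrank K U = 0 ∨ finrank K W = 0 ∨ finrank K U = 2 ∨ finrank K W = 2) :
    IsUnbreakable K K[X] (AEval' f) := by
  intro P Q hPQ
  let e := (AEval.mapSubmodule K V f).symm
  have hfin (P : Submodule K[X] (AEval' f)) : finrank K (e P : Submodule K V) = finrank K P := by
    rw [(AEval.equiv_mapSubmodule f _ (e P).2).finrank_eq, Subtype.coe_eta,
      OrderIso.apply_symm_apply]
  simpa only [hfin] using
    hf _ _ ((Module.End.invtSubmodule.isCompl_iff _).1 (e.isCompl hPQ)) (e P).2 (e Q).2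

end Unbreakable

theorem finrank_end_le_of_isUnbreakable {K M : Type*} [Field K] [AddCommGroup M] [Module K[X] M]
    [Module K M] [IsScalarTower K K[X] M] [FiniteDimensional K M]
    (hM : Module.IsTorsion K[X] M) (hu : IsUnbreakable K K[X] M) (hn : 7 ≤ finrank K M) :
    finrank K (Module.End K[X] M) ≤ finrank K M + 4 := by
  classical
  have : Module.Finite K[X] M := Module.Finite.of_restrictScalars_finite K K[X] M
  obtain ⟨ι, _, p, -, e, ⟨ψ⟩⟩ := Module.equiv_directSum_of_isTorsion hM
  let A i := K[X] ⧸ K[X] ∙ p i ^ e i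
  let ψ' : M ≃ₗ[K[X]] ∀ i, A i := ψ.trans (DirectSum.linearEquivFunOnFintype K[X] ι A)
  have : FiniteDimensional K (∀ i, A i) := Module.Finite.equiv (ψ'.restrictScalars K)
  have (i : ι) : FiniteDimensional K (A i) :=
    FiniteDimensional.of_injective ((single K[X] A i).restrictScalars K) (Pi.single_injective i)
  have hsum : ∑ i, finrank K (A i) = finrank K M := by
    rw [(ψ'.restrictScalars K).finrank_eq, finrank_pi_fintype]
  calc finrank K (Module.End K[X] M)
      = finrank K (Module.End K[X] (∀ i, A i)) := (ψ'.conj.restrictScalars K).finrank_eq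
    _ = ∑ i, ∑ j, finrank K (A i →ₗ[K[X]] A j) := finrank_end_pi A
    _ ≤ ∑ i, ∑ j, min (finrank K (A i)) (finrank K (A j)) := sum_le_sum fun i _ =>
        sum_le_sum fun j _ => finrank_hom_quotient_span_singleton_le_min _ _
    _ ≤ finrank K M + 4 := hsum ▸ sum_sum_min_le (hsum ▸ hn) (hu.sum_finrank_eq_zero_or_two ψ')

section Centralizer
variable {K V : Type*} [Field K] [AddCommGroup V] [Module K V] (f : Module.End K V)

noncomputable def centralizerToEndAEval :
    Subalgebra.centralizer K {f} →ₗ[K] Module.End K[X] (AEval' f) where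
  toFun g := ofAEval f ((AEval'.of f).toLinearMap ∘ₗ (g : Module.End K V)) fun m => by
    have hg : f * g = g * f := Subalgebra.mem_centralizer_iff K |>.1 g.2 f rfl
    simp [AEval'.X_smul_of, ← Module.End.mul_apply, hg]
  map_add' _ _ := rfl
  map_smul' _ _ := rfl

lemma centralizerToEndAEval_injective : Function.Injective (centralizerToEndAEval f) := by
  intro g h hgh
  ext m
  simpa [centralizerToEndAEval, ofAEval] using congr($hgh (AEval'.of f m))

lemma finrank_centralizer_le_finrank_end_aeval' [FiniteDimensional K V] :
    finrank K (Subalgebra.centralizer K {f}) ≤ finrank K (Module.End K[X] (AEval' f)) :=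
  finrank_le_finrank_of_injective (centralizerToEndAEval_injective f)

end Centralizer

lemma Submodule.map_eq_of_mem_invtSubmodule {K V : Type*} [Field K] [AddCommGroup V] [Module K V]
    [FiniteDimensional K V] {f : Module.End K V}
    (hf : Function.Injective f) {U : Submodule K V} (hU : U ∈ f.invtSubmodule) : U.map f = U :=
  eq_of_le_of_finrank_eq ((Module.End.mem_invtSubmodule_iff_map_le f).1 hU)
    (equivMapOfInjective f hf U).finrank_eq.symm

lemma card_centralizer_le_pow_finrank {K ι : Type*} [Field K] [Fintype K] [Fintype ι]
    [DecidableEq ι] (x : GL ι K) :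
    Nat.card (Subgroup.centralizer {x}) ≤ Fintype.card K ^
      finrank K (Subalgebra.centralizer K {Matrix.mulVecLin (x : Matrix ι ι K)}) := by
  let C := Subalgebra.centralizer K {Matrix.mulVecLin (x : Matrix ι ι K)}
  have : Finite C := Module.finite_of_finite K
  have : Fintype C := Fintype.ofFinite C
  calc Nat.card (Subgroup.centralizer {x}) ≤ Nat.card C := by
        refine Nat.card_le_card_of_injective (fun g => ⟨Matrix.mulVecLin (g : GL ι K), ?_⟩) ?_
        · rintro _ rfl
          have := congr(Units.val $(Subgroup.mem_centralizer_iff.1 g.2 x rfl))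
          simp only [Units.val_mul] at this
          simp only [Module.End.mul_eq_comp, ← Matrix.mulVecLin_mul, this]
        · intro g h hgh
          exact Subtype.ext <| Units.ext <| Matrix.toLin'.injective congr(Subtype.val $hgh)
    _ = Fintype.card K ^ finrank K C := by
        rw [Nat.card_eq_fintype_card (α := C), Module.card_eq_pow_finrank (K := K) (V := C)]

/-- If `n ≥ 7` and `x ∈ GL_n(𝔽₃)` is unbreakable — i.e. there is no direct sum
decomposition `𝔽₃ⁿ = U ⊕ W` into nonzero `x`-invariant subspaces with
`dim U ≠ 2` and `dim W ≠ 2` — then `|C_{GL_n(3)}(x)| ≤ 3^{n+2} · 2⁴`. -/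
theorem stmt_19 (n : ℕ) (hn : 7 ≤ n) (x : Matrix.GeneralLinearGroup (Fin n) (ZMod 3))
    (hunbr : ¬ ∃ U W : Submodule (ZMod 3) (Fin n → ZMod 3),
      U ≠ ⊥ ∧ W ≠ ⊥ ∧ IsCompl U W ∧
      U.map (Matrix.mulVecLin (↑x : Matrix (Fin n) (Fin n) (ZMod 3))) = U ∧
      W.map (Matrix.mulVecLin (↑x : Matrix (Fin n) (Fin n) (ZMod 3))) = W ∧
      Module.finrank (ZMod 3) U ≠ 2 ∧ Module.finrank (ZMod 3) W ≠ 2) :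
    Nat.card (Subgroup.centralizer {x} :
        Subgroup (Matrix.GeneralLinearGroup (Fin n) (ZMod 3))) ≤ 3 ^ (n + 2) * 2 ^ 4 := by
  set f := Matrix.mulVecLin (x : Matrix (Fin n) (Fin n) (ZMod 3))
  have hf : Function.Injective f := Matrix.mulVec_injective_iff_isUnit.2 x.isUnit
  have hu : IsUnbreakable (ZMod 3) (ZMod 3)[X] (AEval' f) := isUnbreakable_aeval' f
    fun U W hUW hU hW => by
      by_contra! h
      exact hunbr ⟨U, W, mt Submodule.finrank_eq_zero.2 h.1, mt Submodule.finrank_eq_zero.2 h.2.1,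
        hUW, Submodule.map_eq_of_mem_invtSubmodule hf hU,
        Submodule.map_eq_of_mem_invtSubmodule hf hW, h.2.2⟩
  have hV : finrank (ZMod 3) (AEval' f) = n := by
    rw [← (AEval'.of f).finrank_eq, finrank_fin_fun]
  have hdim := (finrank_centralizer_le_finrank_end_aeval' f).trans
    (finrank_end_le_of_isUnbreakable (AEval.isTorsion_of_finiteDimensional _ _ _) hu (hV.symm ▸ hn))
  calc Nat.card (Subgroup.centralizer {x})
        ≤ 3 ^ finrank (ZMod 3) (Subalgebra.centralizer _ {f}) := by
          simpa using card_centralizer_le_pow_finrank x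
    _ ≤ 3 ^ (n + 4) := Nat.pow_le_pow_right (by norm_num) (hV ▸ hdim)
    _ = 3 ^ (n + 2) * 9 := by ring
    _ ≤ 3 ^ (n + 2) * 2 ^ 4 := Nat.mul_le_mul_left _ (by norm_num)
end
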